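/- arXiv:math/0511584 — 5 statements merged into one kernel-verified Lean document; each statement's English description precedes it below -/
import Mathlib

section
/- Let S, T > 1 and let σ : ℍ → ℍ be analytic and non-constant with σ(S·z) = T·σ(z) for all z ∈ ℍ. Assume σ is canonical, i.e.: for all z, w ∈ ℍ, (∃ m ∈ ℤ with σ(z) = T^m·σ(w)) holds if and only if (∃ m ∈ ℤ with z = S^m·w); and for every ζ ∈ ℍ there exist z ∈ ℍ and m ∈ ℤ with T^m·ζ = σ(z). Then S = T and there exists c > 0 with σ(z) = c·z for all z ∈ ℍ. -/
open Complex Filter Set Topology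
open Metric ComplexConjugate

noncomputable section

/-- The upper half-plane `ℍ`, as a subset of `ℂ`. -/
def UHP : Set ℂ := {z : ℂ | 0 < z.im}

/-- The hyperbolic distance `ρ_ℍ` on the upper half-plane. -/
noncomputable def rho (z w : ℂ) : ℝ :=
  2 * Real.arsinh (‖z - w‖ / (2 * Real.sqrt (z.im * w.im)))

/-- The Stolz angle `{z ∈ ℍ : θ < Arg z < π - θ}` at infinity. -/
def StolzAngle (θ : ℝ) : Set ℂ :=
  {z : ℂ | θ < Complex.arg z ∧ Complex.arg z < Real.pi - θ}

/-- `f(z) → 0` as `z → ∞` within every Stolz angle. -/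
def NTLimZeroAtInf (f : ℂ → ℂ) : Prop :=
  ∀ θ : ℝ, 0 < θ → θ < Real.pi / 2 →
    Filter.Tendsto f
      (Filter.comap (fun z : ℂ => ‖z‖) Filter.atTop ⊓
        Filter.principal (StolzAngle θ))
      (nhds (0 : ℂ))

private lemma analytic_hasStrictDerivAt {f : ℂ → ℂ} {x : ℂ} (h : AnalyticAt ℂ f x) :
    HasStrictDerivAt f (deriv f x) x := by
  rcases h with ⟨p, hp⟩
  have h1 := hp.hasStrictDerivAt
  rwa [← hp.deriv] at h1

private lemma deriv_ne_zero_of_injOn {f : ℂ → ℂ} {U : Set ℂ} (hU : IsOpen U)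
    (hd : DifferentiableOn ℂ f U) (hinj : Set.InjOn f U) {z₀ : ℂ} (hz₀ : z₀ ∈ U) :
    deriv f z₀ ≠ 0 := by
  intro hder
  have hfa : AnalyticAt ℂ f z₀ := hd.analyticAt (hU.mem_nhds hz₀)
  set F : ℂ → ℂ := fun z => f z - f z₀ with hFdef
  have hFa : AnalyticAt ℂ F z₀ := hfa.sub analyticAt_const
  -- F is not eventually zero
  have hne : ¬ ∀ᶠ z in 𝓝 z₀, F z = 0 := by
    intro h
    have h2 : ∀ᶠ z in 𝓝[≠] z₀, F z = 0 ∧ z ∈ U :=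
      (h.and (hU.mem_nhds hz₀)).filter_mono nhdsWithin_le_nhds
    obtain ⟨z, ⟨hz1, hz2⟩, hz3⟩ := (h2.and self_mem_nhdsWithin).exists
    have : f z = f z₀ := by simpa [hFdef, sub_eq_zero] using hz1
    exact hz3 (hinj hz2 hz₀ this)
  obtain ⟨n, g, hg_an, hg0, hg_eq⟩ := hFa.exists_eventuallyEq_pow_smul_nonzero_iff.mpr hne
  simp only [smul_eq_mul] at hg_eq
  have hF0 : F z₀ = 0 := by simp [hFdef]
  have hn0 : n ≠ 0 := by
    rintro rfl
    have h1 := hg_eq.self_of_nhds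
    simp [hF0] at h1
    exact hg0 h1.symm
  have hdF : HasDerivAt F 0 z₀ := by
    have h1 : HasDerivAt f (deriv f z₀) z₀ := (hd.differentiableAt (hU.mem_nhds hz₀)).hasDerivAt
    simpa [hFdef, hder] using h1.sub_const (f z₀)
  have hn1 : n ≠ 1 := by
    rintro rfl
    have h1 : HasDerivAt (fun z : ℂ => z - z₀) 1 z₀ := (hasDerivAt_id z₀).sub_const z₀
    have h2 : HasDerivAt g (deriv g z₀) z₀ := hg_an.differentiableAt.hasDerivAt
    have h3 : HasDerivAt (fun z => (z - z₀) ^ 1 * g z) (g z₀) z₀ := by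
      have := (h1.mul h2)
      simpa using (show HasDerivAt (fun z => (z - z₀) * g z) _ z₀ from this.congr_deriv (by simp))
    have h4 : HasDerivAt F (g z₀) z₀ := h3.congr_of_eventuallyEq (hg_eq.mono fun z hz => hz)
    exact hg0 (h4.unique hdF)
  have hn2 : 2 ≤ n := by omega
  set a := g z₀ with ha
  -- n-th root of g near z₀
  set r : ℂ → ℂ := fun z => Complex.exp ((Complex.log (g z / a) + Complex.log a) / n) with hrdef
  have hslit : g z₀ / a ∈ Complex.slitPlane := by
    rw [← ha, div_self hg0]; exact Complex.one_mem_slitPlane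
  have hr_an : AnalyticAt ℂ r z₀ := by
    apply AnalyticAt.cexp
    exact (((hg_an.div analyticAt_const hg0).clog hslit).add
      analyticAt_const).div analyticAt_const ((Nat.cast_ne_zero (R := ℂ)).mpr hn0)
  have hgne : ∀ᶠ z in 𝓝 z₀, g z ≠ 0 := hg_an.continuousAt.eventually_ne hg0
  have hrn : ∀ᶠ z in 𝓝 z₀, r z ^ n = g z := by
    filter_upwards [hgne] with z hz
    rw [hrdef]
    have hnn : (n : ℂ) ≠ 0 := (Nat.cast_ne_zero (R := ℂ)).mpr hn0
    rw [← Complex.exp_nat_mul, mul_div_cancel₀ _ hnn, Complex.exp_add,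
      Complex.exp_log (div_ne_zero hz hg0), Complex.exp_log hg0, div_mul_cancel₀ _ hg0]
  -- G = (z - z₀) * r z, an analytic "n-th root" of F
  set G : ℂ → ℂ := fun z => (z - z₀) * r z with hGdef
  have hFG : ∀ᶠ z in 𝓝 z₀, F z = G z ^ n := by
    filter_upwards [hrn, hg_eq] with z h1 h2
    rw [hGdef]; simp only [mul_pow]; rw [h1, h2]
  have hG_an : AnalyticAt ℂ G z₀ := (analyticAt_id.sub analyticAt_const).mul hr_an
  have hb : r z₀ ≠ 0 := Complex.exp_ne_zero _
  have hGd : HasDerivAt G (r z₀) z₀ := by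
    have h1 : HasDerivAt (fun z : ℂ => z - z₀) 1 z₀ := (hasDerivAt_id z₀).sub_const z₀
    have h2 : HasDerivAt r (deriv r z₀) z₀ := hr_an.differentiableAt.hasDerivAt
    have := h1.mul h2
    simpa using (show HasDerivAt (fun z => (z - z₀) * r z) _ z₀ from this.congr_deriv (by simp))
  have hGs : HasStrictDerivAt G (r z₀) z₀ := by
    have h1 := analytic_hasStrictDerivAt hG_an
    rwa [hGd.deriv] at h1
  have hG0 : G z₀ = 0 := by simp [hGdef]
  -- local inverse
  set φ := hGs.localInverse G (r z₀) z₀ hb with hφdef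
  have hE1 : ∀ᶠ y in 𝓝 (0 : ℂ), G (φ y) = y := by
    have := (hGs.hasStrictFDerivAt_equiv hb).eventually_right_inverse
    rwa [hG0] at this
  have hE2 : Filter.Tendsto φ (𝓝 0) (𝓝 z₀) := by
    have := (hGs.hasStrictFDerivAt_equiv hb).localInverse_tendsto
    rwa [hG0] at this
  -- the root of unity
  set ζ : ℂ := Complex.exp (2 * Real.pi * Complex.I / n) with hζdef
  have hζn : ζ ^ n = 1 := by
    rw [hζdef, ← Complex.exp_nat_mul, mul_div_cancel₀ _ ((Nat.cast_ne_zero (R := ℂ)).mpr hn0)]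
    exact Complex.exp_two_pi_mul_I
  have hζ1 : ζ ≠ 1 := by
    rw [hζdef]
    intro h
    obtain ⟨k, hk⟩ := Complex.exp_eq_one_iff.mp h
    have h2πI : (2 * Real.pi * Complex.I : ℂ) ≠ 0 := by
      simp [Complex.I_ne_zero, Real.pi_ne_zero, Complex.ofReal_ne_zero]
    rw [div_eq_iff ((Nat.cast_ne_zero (R := ℂ)).mpr hn0)] at hk
    have h3 : (2 * (Real.pi:ℂ) * Complex.I) * ((k:ℂ) * n) = (2 * (Real.pi:ℂ) * Complex.I) * 1 := by
      linear_combination -hk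
    have h4 : ((k * n : ℤ) : ℂ) = ((1 : ℤ) : ℂ) := by push_cast; simpa using mul_left_cancel₀ h2πI h3
    have h5 : k * (n : ℤ) = 1 := Int.cast_injective h4
    have h6 : (n : ℤ) ≤ 1 := Int.le_of_dvd one_pos ⟨k, by linarith [h5]⟩
    omega
  -- pick a small nonzero y; φ y and φ (ζ y) are distinct points with equal f-values
  have hP : ∀ᶠ y in 𝓝 (0:ℂ), (φ y ∈ U ∧ F (φ y) = G (φ y) ^ n) ∧ G (φ y) = y :=
    (hE2.eventually ((hU.eventually_mem hz₀).and hFG)).and hE1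
  have hmul : Filter.Tendsto (fun y : ℂ => ζ * y) (𝓝 0) (𝓝 0) := by
    have h := ((continuous_const.mul continuous_id).tendsto (0:ℂ) : Filter.Tendsto (fun y : ℂ => ζ * y) (𝓝 0) (𝓝 (ζ * 0)))
    simpa using (show Filter.Tendsto (fun y : ℂ => ζ * y) (𝓝 0) (𝓝 (ζ * 0)) from h)
  have hQ := hP.and (hmul.eventually hP)
  obtain ⟨y, ⟨⟨⟨hU1, hF1⟩, hG1⟩, ⟨hU2, hF2⟩, hG2⟩, hy0⟩ :=
    ((hQ.filter_mono (nhdsWithin_le_nhds (s := {(0:ℂ)}ᶜ))).and self_mem_nhdsWithin).exists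
  have hy0' : y ≠ 0 := hy0
  have hfeq : f (φ y) = f (φ (ζ * y)) := by
    have e1 : F (φ y) = y ^ n := by rw [hF1, hG1]
    have e2 : F (φ (ζ*y)) = y ^ n := by rw [hF2, hG2, mul_pow, hζn, one_mul]
    have e3 := e1.trans e2.symm
    simpa [hFdef, sub_left_inj] using e3
  have heq := hinj hU1 hU2 hfeq
  rw [heq, hG2] at hG1
  have hz : (ζ - 1) * y = 0 := by linear_combination hG1
  rcases mul_eq_zero.mp hz with h | h
  · exact hζ1 (by linear_combination h)
  · exact hy0' h



private noncomputable def Cay (p z : ℂ) : ℂ := (z - p) / (z - conj p)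
private noncomputable def CayInv (p w : ℂ) : ℂ := (p - conj p * w) / (1 - w)

private lemma sub_conj_ne {p z : ℂ} (hp : p ∈ UHP) (hz : z ∈ UHP) : z - conj p ≠ 0 := by
  intro h
  have h1 : (z - conj p).im = 0 := by rw [h]; simp
  simp only [Complex.sub_im, Complex.conj_im] at h1
  have hz' : 0 < z.im := hz
  have hp' : 0 < p.im := hp
  linarith

private lemma cay_mem {p z : ℂ} (hp : p ∈ UHP) (hz : z ∈ UHP) : Cay p z ∈ ball (0:ℂ) 1 := by
  have hz' : 0 < z.im := hz
  have hp' : 0 < p.im := hp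
  have hd := sub_conj_ne hp hz
  have habs : ‖z - p‖ < ‖z - conj p‖ := by
    rw [Complex.norm_def, Complex.norm_def]
    apply Real.sqrt_lt_sqrt (Complex.normSq_nonneg _)
    simp only [Complex.normSq_apply, Complex.sub_re, Complex.sub_im, Complex.conj_re,
      Complex.conj_im]
    nlinarith
  rw [mem_ball_zero_iff, Cay]
  have : ‖(z - p) / (z - conj p)‖ = ‖z - p‖ / ‖z - conj p‖ := by
    simp [map_div₀]
  rw [this, div_lt_one (norm_pos_iff.mpr hd)]
  exact habs

private lemma one_sub_ne {w : ℂ} (hw : w ∈ ball (0:ℂ) 1) : 1 - w ≠ 0 := by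
  intro h
  have h1 : w = 1 := by
    have := sub_eq_zero.mp h; exact this.symm
  rw [h1] at hw
  simp at hw

private lemma ball_re_im {w : ℂ} (hw : w ∈ ball (0:ℂ) 1) : w.re ^ 2 + w.im ^ 2 < 1 := by
  have h2 : ‖w‖ < 1 := mem_ball_zero_iff.mp hw
  nlinarith [Complex.sq_norm w, Complex.normSq_apply w, norm_nonneg w]

private lemma cayInv_mem {p w : ℂ} (hp : p ∈ UHP) (hw : w ∈ ball (0:ℂ) 1) :
    CayInv p w ∈ UHP := by
  have hp' : 0 < p.im := hp
  have hw' := ball_re_im hw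
  show 0 < (CayInv p w).im
  rw [CayInv, Complex.div_im]
  have hden : 0 < Complex.normSq (1 - w) := by
    rw [Complex.normSq_pos]; exact one_sub_ne hw
  rw [div_sub_div_same, div_pos_iff]
  left
  constructor
  · simp only [Complex.sub_im, Complex.sub_re, Complex.mul_im, Complex.mul_re,
      Complex.conj_re, Complex.conj_im, Complex.one_re, Complex.one_im]
    nlinarith
  · exact hden

private lemma cayInv_cay {p z : ℂ} (hp : p ∈ UHP) (hz : z ∈ UHP) :
    CayInv p (Cay p z) = z := by
  have hd := sub_conj_ne hp hz
  have hpp : p - conj p ≠ 0 := by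
    intro h
    have h1 : (p - conj p).im = 0 := by rw [h]; simp
    simp only [Complex.sub_im, Complex.conj_im] at h1
    have hp' : 0 < p.im := hp
    linarith
  have hden : 1 - Cay p z ≠ 0 := by
    rw [Cay]
    intro h
    rw [sub_eq_zero, eq_div_iff hd, one_mul] at h
    exact hpp (by linear_combination h)
  rw [CayInv, div_eq_iff hden, Cay]
  field_simp
  ring

private lemma pp_ne {p : ℂ} (hp : p ∈ UHP) : p - conj p ≠ 0 := by
  intro h
  have h1 : (p - conj p).im = 0 := by rw [h]; simp
  simp only [Complex.sub_im, Complex.conj_im] at h1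
  have hp' : 0 < p.im := hp
  linarith

private lemma cayInv_sub_conj {p w : ℂ} (hp : p ∈ UHP) (hw : w ∈ ball (0:ℂ) 1) :
    CayInv p w - conj p ≠ 0 := sub_conj_ne hp (cayInv_mem hp hw)

private lemma cay_cayInv {p w : ℂ} (hp : p ∈ UHP) (hw : w ∈ ball (0:ℂ) 1) :
    Cay p (CayInv p w) = w := by
  have h1 := one_sub_ne hw
  have h2 := cayInv_sub_conj hp hw
  rw [Cay, div_eq_iff h2, CayInv]
  rw [CayInv] at h2
  field_simp at h2 ⊢
  ring

private lemma cay_diffAt {p z : ℂ} (hp : p ∈ UHP) (hz : z ∈ UHP) :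
    DifferentiableAt ℂ (Cay p) z := by
  have := sub_conj_ne hp hz
  apply DifferentiableAt.div
  · exact differentiableAt_id.sub (differentiableAt_const _)
  · exact differentiableAt_id.sub (differentiableAt_const _)
  · exact this

private lemma cayInv_diffAt {p w : ℂ} (hw : w ∈ ball (0:ℂ) 1) :
    DifferentiableAt ℂ (CayInv p) w := by
  apply DifferentiableAt.div
  · exact (differentiableAt_const _).sub ((differentiableAt_const _).mul differentiableAt_id)
  · exact (differentiableAt_const _).sub differentiableAt_id
  · exact one_sub_ne hw



private lemma I_mem_UHP : Complex.I ∈ UHP := by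
  show (0:ℝ) < Complex.I.im
  simp

private lemma smul_I_mem_UHP {t : ℝ} (ht : 0 < t) : (t : ℂ) * Complex.I ∈ UHP := by
  show (0:ℝ) < ((t:ℂ) * Complex.I).im
  simp [Complex.mul_im, ht]

private lemma quad_eq_zero {a b c : ℂ} (h : ∀ z ∈ UHP, a * z ^ 2 + b * z + c = 0) :
    a = 0 ∧ b = 0 ∧ c = 0 := by
  have e1 := h _ I_mem_UHP
  have e2 := h _ (smul_I_mem_UHP (by norm_num : (0:ℝ) < 2))
  have e3 := h _ (smul_I_mem_UHP (by norm_num : (0:ℝ) < 3))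
  push_cast at e2 e3
  have hI2 := Complex.I_sq
  have ha : a = 0 := by
    linear_combination (-(1:ℂ)/2) * e1 + e2 + (-(1:ℂ)/2) * e3 + a * hI2
  have hc : c = 0 := by
    linear_combination 3 * e1 - 3 * e2 + e3
  refine ⟨ha, ?_, hc⟩
  rw [ha, hc] at e1
  simp only [zero_mul, add_zero, zero_add, mul_eq_zero] at e1
  rcases e1 with h | h
  · exact h
  · exact absurd h Complex.I_ne_zero




/-- A canonical self-map of `ℍ` intertwining `z ↦ Sz` and `z ↦ Tz` (`S, T > 1`) forces
`S = T` and `σ(z) = cz` for some `c > 0`. -/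
theorem canonical_dilation_intertwiner (S T : ℝ) (hS : 1 < S) (hT : 1 < T)
    (σ : ℂ → ℂ)
    (hσmaps : Set.MapsTo σ UHP UHP)
    (hσdiff : DifferentiableOn ℂ σ UHP)
    (hσnc : ∃ z ∈ UHP, ∃ w ∈ UHP, σ z ≠ σ w)
    (hσeq : ∀ z ∈ UHP, σ ((S : ℂ) * z) = (T : ℂ) * σ z)
    (hcan₁ : ∀ z ∈ UHP, ∀ w ∈ UHP,
      ((∃ m : ℤ, σ z = (T : ℂ) ^ m * σ w) ↔ (∃ m : ℤ, z = (S : ℂ) ^ m * w)))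
    (hcan₂ : ∀ ζ ∈ UHP, ∃ z ∈ UHP, ∃ m : ℤ, (T : ℂ) ^ m * ζ = σ z) :
    S = T ∧ ∃ c : ℝ, 0 < c ∧ ∀ z ∈ UHP, σ z = (c : ℂ) * z := by
  have hUopen : IsOpen UHP := isOpen_lt continuous_const Complex.continuous_im
  have hS0 : (0:ℝ) < S := by linarith
  have hT0 : (0:ℝ) < T := by linarith
  have hSC : (S:ℂ) ≠ 0 := Complex.ofReal_ne_zero.mpr (ne_of_gt hS0)
  have hTC : (T:ℂ) ≠ 0 := Complex.ofReal_ne_zero.mpr (ne_of_gt hT0)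
  -- membership of dilates
  have memS : ∀ (m : ℤ) (z : ℂ), z ∈ UHP → (S:ℂ)^m * z ∈ UHP := by
    intro m z hz
    show 0 < ((S:ℂ)^m * z).im
    rw [← Complex.ofReal_zpow]
    simp only [Complex.mul_im, Complex.ofReal_re, Complex.ofReal_im, zero_mul, add_zero]
    have : (0:ℝ) < S ^ m := zpow_pos hS0 m
    have hz' : 0 < z.im := hz
    nlinarith
  -- iterated functional equation
  have L1 : ∀ (m : ℤ), ∀ z ∈ UHP, σ ((S:ℂ)^m * z) = (T:ℂ)^m * σ z := by
    intro m
    induction m using Int.induction_on with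
    | zero => intro z hz; simp
    | succ n ih =>
      intro z hz
      have h1 : (S:ℂ)^((n:ℤ)+1) * z = (S:ℂ) * ((S:ℂ)^(n:ℤ) * z) := by
        rw [zpow_add_one₀ hSC]; ring
      rw [h1, hσeq _ (memS n z hz), ih z hz, zpow_add_one₀ hTC]; ring
    | pred n ih =>
      intro z hz
      have h2 := hσeq _ (memS (-(n:ℤ)-1) z hz)
      have h3 : (S:ℂ) * ((S:ℂ)^(-(n:ℤ)-1) * z) = (S:ℂ)^(-(n:ℤ)) * z := by
        rw [← mul_assoc, mul_comm (S:ℂ), ← zpow_add_one₀ hSC]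
        norm_num
      rw [h3, ih z hz] at h2
      have h4 : (T:ℂ)^(-(n:ℤ)) = (T:ℂ) * (T:ℂ)^(-(n:ℤ)-1) := by
        rw [mul_comm (T:ℂ), ← zpow_add_one₀ hTC]
        norm_num
      rw [h4, mul_assoc] at h2
      exact (mul_left_cancel₀ hTC h2).symm
  -- σ values are nonzero
  have hσne : ∀ z ∈ UHP, σ z ≠ 0 := by
    intro z hz h
    have h1 : (0:ℝ) < (σ z).im := hσmaps hz
    rw [h] at h1
    simp at h1
  -- injectivity
  have hinj : Set.InjOn σ UHP := by
    intro z hz w hw hzw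
    obtain ⟨m, hm⟩ := (hcan₁ z hz w hw).mp ⟨0, by simp [hzw]⟩
    have h1 : σ z = (T:ℂ)^m * σ w := by rw [hm]; exact L1 m w hw
    rw [hzw] at h1
    have hTm : (T:ℂ)^m = 1 := by
      have h2 : ((T:ℂ)^m - 1) * σ w = 0 := by linear_combination -h1
      rcases mul_eq_zero.mp h2 with h3 | h3
      · linear_combination h3
      · exact absurd h3 (hσne w hw)
    have hTmR : (T:ℝ)^m = 1 := by
      have := hTm
      rw [← Complex.ofReal_zpow] at this
      exact_mod_cast this
    have hm0 : m = 0 := by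
      have hinj' := zpow_right_injective₀ hT0 (ne_of_gt hT)
      have : T ^ m = T ^ (0:ℤ) := by rw [hTmR]; norm_num
      exact hinj' this
    rw [hm0] at hm
    simpa using hm
  -- surjectivity
  have hsurj : ∀ w ∈ UHP, ∃ z ∈ UHP, σ z = w := by
    intro w hw
    obtain ⟨z, hz, m, hm⟩ := hcan₂ w hw
    refine ⟨(S:ℂ)^(-m) * z, memS _ _ hz, ?_⟩
    rw [L1 (-m) z hz, ← hm]
    rw [← mul_assoc, ← zpow_add₀ hTC]
    simp
  -- nonvanishing derivative
  have hder : ∀ z ∈ UHP, deriv σ z ≠ 0 := fun z hz =>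
    deriv_ne_zero_of_injOn hUopen hσdiff hinj hz
  -- inverse map
  set τ : ℂ → ℂ := Function.invFunOn σ UHP with hτdef
  have hτmem : ∀ w ∈ UHP, τ w ∈ UHP ∧ σ (τ w) = w := by
    intro w hw
    obtain ⟨z, hz, hzw⟩ := hsurj w hw
    exact ⟨Function.invFunOn_mem ⟨z, hz, hzw⟩, Function.invFunOn_eq ⟨z, hz, hzw⟩⟩
  have hτσ : ∀ z ∈ UHP, τ (σ z) = z := by
    intro z hz
    have h := hτmem (σ z) (hσmaps hz)
    exact hinj h.1 hz h.2
  have hτdiff : ∀ w ∈ UHP, DifferentiableAt ℂ τ w := by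
    intro w hw
    obtain ⟨z, hz, rfl⟩ := hsurj w hw
    have hσa : AnalyticAt ℂ σ z := hσdiff.analyticAt (hUopen.mem_nhds hz)
    have hσs : HasStrictDerivAt σ (deriv σ z) z := analytic_hasStrictDerivAt hσa
    have hev : ∀ᶠ x in 𝓝 z, τ (σ x) = x := by
      filter_upwards [hUopen.eventually_mem hz] with x hx using hτσ x hx
    exact (hσs.to_local_left_inverse (hder z hz) hev).hasDerivAt.differentiableAt
  -- Cayley conjugation to the unit disk
  set q := σ Complex.I with hqdef
  have hqU : q ∈ UHP := hσmaps I_mem_UHP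
  set g : ℂ → ℂ := fun w => Cay q (σ (CayInv Complex.I w)) with hgdef
  set h : ℂ → ℂ := fun w => Cay Complex.I (τ (CayInv q w)) with hhdef
  have hCayInv0 : ∀ p : ℂ, CayInv p 0 = p := by intro p; simp [CayInv]
  have hCaypp : ∀ p : ℂ, Cay p p = 0 := by intro p; simp [Cay]
  have hg0 : g 0 = 0 := by rw [hgdef]; simp only [hCayInv0, ← hqdef, hCaypp]
  have hh0 : h 0 = 0 := by
    rw [hhdef]; simp only [hCayInv0, ← hqdef]
    rw [hτσ _ I_mem_UHP, hCaypp]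
  have hgmap : MapsTo g (ball (0:ℂ) 1) (ball (0:ℂ) 1) := fun w hw =>
    cay_mem hqU (hσmaps (cayInv_mem I_mem_UHP hw))
  have hhmap : MapsTo h (ball (0:ℂ) 1) (ball (0:ℂ) 1) := fun w hw =>
    cay_mem I_mem_UHP (hτmem _ (cayInv_mem hqU hw)).1
  have hgdiff : DifferentiableOn ℂ g (ball (0:ℂ) 1) := by
    intro w hw
    apply DifferentiableAt.differentiableWithinAt
    have h1 : DifferentiableAt ℂ (CayInv Complex.I) w := cayInv_diffAt hw
    have hmem1 : CayInv Complex.I w ∈ UHP := cayInv_mem I_mem_UHP hw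
    have h2 : DifferentiableAt ℂ σ (CayInv Complex.I w) :=
      hσdiff.differentiableAt (hUopen.mem_nhds hmem1)
    have h3 : DifferentiableAt ℂ (Cay q) (σ (CayInv Complex.I w)) :=
      cay_diffAt hqU (hσmaps hmem1)
    exact (h3.comp _ h2).comp _ h1
  have hhdiff : DifferentiableOn ℂ h (ball (0:ℂ) 1) := by
    intro w hw
    apply DifferentiableAt.differentiableWithinAt
    have h1 : DifferentiableAt ℂ (CayInv q) w := cayInv_diffAt hw
    have hmem1 : CayInv q w ∈ UHP := cayInv_mem hqU hw
    have h2 : DifferentiableAt ℂ τ (CayInv q w) := hτdiff _ hmem1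
    have h3 : DifferentiableAt ℂ (Cay Complex.I) (τ (CayInv q w)) :=
      cay_diffAt I_mem_UHP (hτmem _ hmem1).1
    exact (h3.comp _ h2).comp _ h1
  have hgle : ∀ w ∈ ball (0:ℂ) 1, ‖g w‖ ≤ ‖w‖ := by
    intro w hw
    have h1 := Complex.dist_le_div_mul_dist_of_mapsTo_ball hgdiff (by rw [hg0]; exact hgmap.mono_right ball_subset_closedBall) hw
    simpa [hg0, dist_eq_norm] using h1
  have hhle : ∀ w ∈ ball (0:ℂ) 1, ‖h w‖ ≤ ‖w‖ := by
    intro w hw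
    have h1 := Complex.dist_le_div_mul_dist_of_mapsTo_ball hhdiff (by rw [hh0]; exact hhmap.mono_right ball_subset_closedBall) hw
    simpa [hh0, dist_eq_norm] using h1
  have hhg : ∀ w ∈ ball (0:ℂ) 1, h (g w) = w := by
    intro w hw
    rw [hgdef, hhdef]
    have hmem1 : CayInv Complex.I w ∈ UHP := cayInv_mem I_mem_UHP hw
    have hmem2 : σ (CayInv Complex.I w) ∈ UHP := hσmaps hmem1
    simp only
    rw [cayInv_cay hqU hmem2, hτσ _ hmem1, cay_cayInv I_mem_UHP hw]
  -- Schwarz equality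
  have hw₀mem : (1/2 : ℂ) ∈ ball (0:ℂ) 1 := by
    rw [mem_ball_zero_iff]; norm_num
  have hw₀ne : (1/2 : ℂ) ≠ 0 := by norm_num
  have hgeq : ‖g (1/2)‖ = ‖(1/2 : ℂ)‖ := by
    refine le_antisymm (hgle _ hw₀mem) ?_
    have h1 := hhle _ (hgmap hw₀mem)
    rwa [hhg _ hw₀mem] at h1
  have hds : ‖dslope g 0 (1/2)‖ = 1 / 1 := by
    rw [dslope_of_ne _ hw₀ne, slope_def_field, hg0, sub_zero, sub_zero, norm_div, hgeq]
    norm_num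
  have haff := Complex.affine_of_mapsTo_ball_of_exists_norm_dslope_eq_div hgdiff
    (by rw [hg0]; exact hgmap.mono_right ball_subset_closedBall) hw₀mem hds
  set l := dslope g 0 (1/2) with hldef
  have hl1 : ‖l‖ = 1 := by rw [hldef, hds]; norm_num
  have hlne : l ≠ 0 := by
    intro hl
    rw [hl] at hl1
    simp at hl1
  have hlin : ∀ w ∈ ball (0:ℂ) 1, g w = l * w := by
    intro w hw
    have h1 := haff hw
    rw [hg0] at h1
    simpa [smul_eq_mul, mul_comm] using h1
  -- back to the half-plane: Cay q (σ z) = l * Cay I z on UHP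
  have key : ∀ z ∈ UHP, Cay q (σ z) = l * Cay Complex.I z := by
    intro z hz
    have h1 : CayInv Complex.I (Cay Complex.I z) = z := cayInv_cay I_mem_UHP hz
    have h2 : Cay Complex.I z ∈ ball (0:ℂ) 1 := cay_mem I_mem_UHP hz
    have h3 := hlin _ h2
    rw [hgdef] at h3
    simp only at h3
    rwa [h1] at h3
  -- Möbius form of σ
  set α : ℂ := q - l * conj q with hαdef
  set β : ℂ := Complex.I * (q + l * conj q) with hβdef
  set γ : ℂ := 1 - l with hγdef
  set δ : ℂ := Complex.I * (1 + l) with hδdef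
  have hconjI : conj Complex.I = -Complex.I := Complex.conj_I
  have moeb : ∀ z ∈ UHP, σ z * (γ * z + δ) = α * z + β := by
    intro z hz
    have hkey := key z hz
    have d1 : σ z - conj q ≠ 0 := sub_conj_ne hqU (hσmaps hz)
    have d2 : z - conj Complex.I ≠ 0 := sub_conj_ne I_mem_UHP hz
    rw [Cay, Cay, div_eq_iff d1] at hkey
    rw [hconjI, sub_neg_eq_add] at hkey d2
    have hkey2 : (σ z - q) * (z + Complex.I) = l * (z - Complex.I) * (σ z - conj q) := by
      rw [hkey]
      field_simp
    rw [hαdef, hβdef, hγdef, hδdef]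
    linear_combination hkey2
  -- nondegeneracy
  have hqim : q.im ≠ 0 := ne_of_gt hqU
  have hsubconj : q - conj q = 2 * (q.im:ℂ) * Complex.I := by
    have := Complex.sub_conj q
    push_cast at this
    exact this
  have hnd : α * δ - β * γ = -4 * l * (q.im : ℂ) := by
    rw [hαdef, hβdef, hγdef, hδdef]
    linear_combination (2 * Complex.I * l) * hsubconj + (4 * l * (q.im:ℂ)) * Complex.I_sq
  have hndne : α * δ - β * γ ≠ 0 := by
    rw [hnd]
    intro hx
    rcases mul_eq_zero.mp hx with h' | h'
    · rcases mul_eq_zero.mp h' with h'' | h''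
      · norm_num at h''
      · exact hlne h''
    · exact hqim (by exact_mod_cast h')
  -- functional equation for the coefficients
  have hSz : ∀ z ∈ UHP, (S:ℂ) * z ∈ UHP := by
    intro z hz
    have h' := memS 1 z hz
    simpa using h'
  have E : ∀ z ∈ UHP, (T:ℂ) * (α * z + β) * (γ * ((S:ℂ) * z) + δ)
      = (α * ((S:ℂ) * z) + β) * (γ * z + δ) := by
    intro z hz
    have A := moeb z hz
    have B := moeb _ (hSz z hz)
    have C := hσeq z hz
    rw [C] at B
    linear_combination (γ * z + δ) * B - (T:ℂ) * (γ * ((S:ℂ)*z) + δ) * A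
  set A2 : ℂ := ((T:ℂ) - 1) * (S:ℂ) * α * γ with hA2def
  set A1 : ℂ := (T:ℂ) * α * δ + (T:ℂ) * β * γ * (S:ℂ) - α * (S:ℂ) * δ - β * γ with hA1def
  set A0 : ℂ := ((T:ℂ) - 1) * β * δ with hA0def
  have hquad : ∀ z ∈ UHP, A2 * z ^ 2 + A1 * z + A0 = 0 := by
    intro z hz
    have hE := E z hz
    rw [hA2def, hA1def, hA0def]
    linear_combination hE
  obtain ⟨h2, h1, h0⟩ := quad_eq_zero hquad
  have hT1 : (T:ℂ) - 1 ≠ 0 := by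
    intro hx
    have hx1 : (T:ℂ) = 1 := by linear_combination hx
    have hx2 : T = 1 := by exact_mod_cast hx1
    linarith
  have hαγ : α * γ = 0 := by
    rw [hA2def] at h2
    rcases mul_eq_zero.mp h2 with h' | h'
    · rcases mul_eq_zero.mp h' with h'' | h''
      · rcases mul_eq_zero.mp h'' with h3 | h3
        · exact absurd h3 hT1
        · exact absurd h3 hSC
      · rw [h'']; ring
    · rw [h']; ring
  have hβδ : β * δ = 0 := by
    rw [hA0def] at h0
    rcases mul_eq_zero.mp h0 with h' | h'
    · rcases mul_eq_zero.mp h' with h'' | h''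
      · exact absurd h'' hT1
      · rw [h'']; ring
    · rw [h']; ring
  have hTS1 : (T:ℂ) * (S:ℂ) - 1 ≠ 0 := by
    intro hx
    have hx' : (T:ℂ) * (S:ℂ) = 1 := by linear_combination hx
    have hx2 : T * S = 1 := by exact_mod_cast hx'
    nlinarith
  rw [hA1def] at h1
  rcases mul_eq_zero.mp hαγ with hα | hγ
  · -- α = 0 : contradiction with TS > 1
    exfalso
    have hβγ : β * γ ≠ 0 := by
      intro hx
      exact hndne (by rw [hα, hx]; ring)
    rw [hα] at h1
    have h3 : β * γ * ((T:ℂ) * (S:ℂ) - 1) = 0 := by linear_combination h1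
    rcases mul_eq_zero.mp h3 with h' | h'
    · exact hβγ h'
    · exact hTS1 h'
  · -- γ = 0 : the dilation case
    have hαδ : α * δ ≠ 0 := by
      intro hx
      exact hndne (by rw [hγ, hx]; ring)
    have hδne : δ ≠ 0 := right_ne_zero_of_mul hαδ
    have hβ : β = 0 := by
      rcases mul_eq_zero.mp hβδ with h' | h'
      · exact h'
      · exact absurd h' hδne
    have hTSc : (T:ℂ) = (S:ℂ) := by
      rw [hγ, hβ] at h1
      have h3 : ((T:ℂ) - (S:ℂ)) * (α * δ) = 0 := by linear_combination h1
      rcases mul_eq_zero.mp h3 with h' | h'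
      · linear_combination h'
      · exact absurd h' hαδ
    have hST : S = T := by
      have : S = (T:ℝ) := by exact_mod_cast hTSc.symm
      exact this
    have hσform : ∀ z ∈ UHP, σ z = (α / δ) * z := by
      intro z hz
      have hm := moeb z hz
      rw [hγ, hβ] at hm
      rw [div_mul_eq_mul_div, eq_div_iff hδne]
      linear_combination hm
    set cc := α / δ with hccdef
    have hccI : 0 < (cc * Complex.I).im := by
      have h' := hσform _ I_mem_UHP
      have h'' : σ Complex.I ∈ UHP := hσmaps I_mem_UHP
      rw [h'] at h''
      exact h''
    have hccre : 0 < cc.re := by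
      simpa [Complex.mul_im] using hccI
    have hccim : cc.im = 0 := by
      by_contra hx
      set t : ℝ := (-1 - cc.re)/cc.im with htdef
      have hmem : (t:ℂ) + Complex.I ∈ UHP := by
        show (0:ℝ) < ((t:ℂ) + Complex.I).im
        simp
      have h5 := hσform _ hmem
      have h6 : 0 < (σ ((t:ℂ) + Complex.I)).im := hσmaps hmem
      rw [h5] at h6
      have h7 : (cc * ((t:ℂ) + Complex.I)).im = cc.re + cc.im * t := by
        simp [Complex.mul_im, Complex.add_re, Complex.add_im]
      rw [h7, htdef] at h6
      have h8 : cc.re + cc.im * ((-1 - cc.re)/cc.im) = -1 := by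
        field_simp
        ring
      rw [h8] at h6
      linarith
    have hccval : ((cc.re : ℝ) : ℂ) = cc := by
      apply Complex.ext
      · simp
      · simp [hccim]
    refine ⟨hST, cc.re, hccre, ?_⟩
    intro z hz
    rw [hσform z hz, hccval]
end
end

section
/- Let σ : ℍ → ℍ be analytic with σ(z + 1) = σ(z) + 1 for all z ∈ ℍ. Assume σ is canonical, i.e.: for all z, w ∈ ℍ, (∃ m ∈ ℤ with σ(z) = σ(w) + m) holds if and only if z − w ∈ ℤ; and for every ζ ∈ ℍ there exist z ∈ ℍ and m ∈ ℤ with ζ + m = σ(z). Then there exists d ∈ ℝ with σ(z) = z + d for all z ∈ ℍ. -/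
open Complex Filter Set Topology

noncomputable section

namespace CTI

lemma uhp_open : IsOpen UHP := isOpen_lt continuous_const Complex.continuous_im

lemma uhp_preconn : IsPreconnected UHP := (convex_halfSpace_im_gt 0).isPreconnected

lemma I_mem_uhp : Complex.I ∈ UHP := by simp [UHP]

end CTI
namespace CTI
noncomputable def qexp (z : ℂ) : ℂ := Complex.exp (2 * Real.pi * Complex.I * z)

lemma qexp_ne_zero (z : ℂ) : qexp z ≠ 0 := Complex.exp_ne_zero _

lemma two_pi_I_ne_zero : (2 * (Real.pi : ℂ) * Complex.I) ≠ 0 := by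
  simp [Real.pi_ne_zero, Complex.I_ne_zero]

lemma abs_qexp (z : ℂ) : ‖qexp z‖ = Real.exp (-(2 * Real.pi * z.im)) := by
  rw [qexp, Complex.norm_exp]
  congr 1
  simp [Complex.mul_re, Complex.mul_im]

lemma abs_qexp_lt_one {z : ℂ} (hz : 0 < z.im) : ‖qexp z‖ < 1 := by
  rw [abs_qexp, Real.exp_lt_one_iff]
  nlinarith [Real.pi_pos]

lemma qexp_eq_qexp_iff {z w : ℂ} : qexp z = qexp w ↔ ∃ n : ℤ, z - w = (n : ℂ) := by
  rw [qexp, qexp, Complex.exp_eq_exp_iff_exists_int]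
  constructor
  · rintro ⟨n, hn⟩
    refine ⟨n, ?_⟩
    have : 2 * (Real.pi:ℂ) * Complex.I * z - 2 * (Real.pi:ℂ) * Complex.I * w
        = (n : ℂ) * (2 * (Real.pi:ℂ) * Complex.I) := by rw [hn]; ring
    have h2 : (2 * (Real.pi:ℂ) * Complex.I) * (z - w - n) = 0 := by linear_combination this
    rcases mul_eq_zero.1 h2 with h | h
    · exact absurd h two_pi_I_ne_zero
    · linear_combination h
  · rintro ⟨n, hn⟩
    refine ⟨n, ?_⟩
    have : z = w + n := by linear_combination hn
    rw [this]; ring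

lemma qexp_add_int (z : ℂ) (n : ℤ) : qexp (z + n) = qexp z := by
  symm; rw [qexp_eq_qexp_iff]; exact ⟨-n, by push_cast; ring⟩

noncomputable def invQ (q : ℂ) : ℂ := Complex.log q / (2 * Real.pi * Complex.I)

lemma qexp_invQ {q : ℂ} (hq : q ≠ 0) : qexp (invQ q) = q := by
  rw [qexp, invQ, mul_div_cancel₀ _ two_pi_I_ne_zero, Complex.exp_log hq]

lemma invQ_mem_uhp {q : ℂ} (hq0 : q ≠ 0) (hq1 : ‖q‖ < 1) : invQ q ∈ UHP := by
  have h := abs_qexp (invQ q)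
  rw [qexp_invQ hq0] at h
  have : Real.exp (-(2 * Real.pi * (invQ q).im)) < 1 := h ▸ hq1
  rw [Real.exp_lt_one_iff] at this
  have hπ := Real.pi_pos
  show 0 < (invQ q).im
  nlinarith


section
variable {σ : ℂ → ℂ}

lemma add_int_mem_uhp {z : ℂ} (hz : z ∈ UHP) (n : ℤ) : z + (n : ℂ) ∈ UHP := by
  simpa [UHP] using hz

lemma sigma_shift (hσeq : ∀ z ∈ UHP, σ (z + 1) = σ z + 1) (n : ℤ) :
    ∀ z ∈ UHP, σ (z + (n : ℂ)) = σ z + (n : ℂ) := by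
  have hsub : ∀ z ∈ UHP, σ (z - 1) = σ z - 1 := by
    intro z hz
    have hz1 : z - 1 ∈ UHP := by simpa [UHP] using hz
    have := hσeq _ hz1
    rw [sub_add_cancel] at this
    rw [this]; ring
  induction n using Int.induction_on with
  | zero => simp
  | succ k ih =>
      intro z hz
      have ih' := ih z hz
      have h1 : σ (z + (k : ℂ) + 1) = σ (z + (k : ℂ)) + 1 := hσeq _ (add_int_mem_uhp hz k)
      push_cast at ih' ⊢
      rw [← add_assoc, h1, ih']; ring
  | pred k ih =>
      intro z hz
      have ih' := ih z hz
      have hw : z + -(k : ℂ) ∈ UHP := by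
        have := add_int_mem_uhp hz (-k); push_cast at this; exact this
      have h1 : σ (z + -(k : ℂ) - 1) = σ (z + -(k : ℂ)) - 1 := hsub _ hw
      push_cast at ih' ⊢
      have e : z + (-(k : ℂ) - 1) = z + -(k : ℂ) - 1 := by ring
      rw [e, h1, ih']; ring

/-- The induced map on the punctured disk. -/
noncomputable def Phi (σ : ℂ → ℂ) (q : ℂ) : ℂ := qexp (σ (invQ q))

def DStar : Set ℂ := Metric.ball (0 : ℂ) 1 \ {0}

lemma mem_dstar_iff {q : ℂ} : q ∈ DStar ↔ q ≠ 0 ∧ ‖q‖ < 1 := by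
  simp [DStar, Metric.mem_ball, Complex.dist_eq, and_comm]

lemma qexp_mem_dstar {z : ℂ} (hz : z ∈ UHP) : qexp z ∈ DStar :=
  mem_dstar_iff.2 ⟨qexp_ne_zero z, abs_qexp_lt_one hz⟩

lemma Phi_qexp (hσmaps : Set.MapsTo σ UHP UHP) (hσeq : ∀ z ∈ UHP, σ (z + 1) = σ z + 1)
    {z : ℂ} (hz : z ∈ UHP) : Phi σ (qexp z) = qexp (σ z) := by
  obtain ⟨hq0, hq1⟩ := mem_dstar_iff.1 (qexp_mem_dstar hz)
  have h1 : qexp (invQ (qexp z)) = qexp z := qexp_invQ hq0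
  obtain ⟨n, hn⟩ := qexp_eq_qexp_iff.1 h1
  have h2 : invQ (qexp z) = z + (n : ℂ) := by linear_combination hn
  rw [Phi, h2, sigma_shift hσeq n z hz, qexp_add_int]

lemma Phi_mem_dstar (hσmaps : Set.MapsTo σ UHP UHP) {q : ℂ} (hq : q ∈ DStar) :
    Phi σ q ∈ DStar := by
  obtain ⟨hq0, hq1⟩ := mem_dstar_iff.1 hq
  exact qexp_mem_dstar (hσmaps (invQ_mem_uhp hq0 hq1))

lemma Phi_injOn (hσmaps : Set.MapsTo σ UHP UHP)
    (hcan₁ : ∀ z ∈ UHP, ∀ w ∈ UHP,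
      ((∃ m : ℤ, σ z = σ w + (m : ℂ)) ↔ (∃ m : ℤ, z - w = (m : ℂ)))) :
    Set.InjOn (Phi σ) DStar := by
  intro q₁ hq₁ q₂ hq₂ h
  obtain ⟨h10, h11⟩ := mem_dstar_iff.1 hq₁
  obtain ⟨h20, h21⟩ := mem_dstar_iff.1 hq₂
  have hz₁ := invQ_mem_uhp h10 h11
  have hz₂ := invQ_mem_uhp h20 h21
  obtain ⟨m, hm⟩ := qexp_eq_qexp_iff.1 h
  have : ∃ m : ℤ, σ (invQ q₁) = σ (invQ q₂) + (m : ℂ) := ⟨m, by linear_combination hm⟩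
  obtain ⟨n, hn⟩ := (hcan₁ _ hz₁ _ hz₂).1 this
  have : qexp (invQ q₁) = qexp (invQ q₂) := qexp_eq_qexp_iff.2 ⟨n, hn⟩
  rwa [qexp_invQ h10, qexp_invQ h20] at this

lemma Phi_surjOn (hσmaps : Set.MapsTo σ UHP UHP) (hσeq : ∀ z ∈ UHP, σ (z + 1) = σ z + 1)
    (hcan₂ : ∀ ζ ∈ UHP, ∃ z ∈ UHP, ∃ m : ℤ, ζ + (m : ℂ) = σ z) :
    Set.SurjOn (Phi σ) DStar DStar := by
  intro w hw
  obtain ⟨hw0, hw1⟩ := mem_dstar_iff.1 hw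
  have hζ : invQ w ∈ UHP := invQ_mem_uhp hw0 hw1
  obtain ⟨z, hz, m, hm⟩ := hcan₂ _ hζ
  refine ⟨qexp z, qexp_mem_dstar hz, ?_⟩
  rw [Phi_qexp hσmaps hσeq hz, ← hm, qexp_add_int, qexp_invQ hw0]

end

lemma dstar_open : IsOpen DStar := Metric.isOpen_ball.sdiff isClosed_singleton

lemma hasStrictDerivAt_qexp (z : ℂ) :
    HasStrictDerivAt qexp (2 * (Real.pi : ℂ) * Complex.I * qexp z) z := by
  have h1 : HasStrictDerivAt (fun w : ℂ => 2 * (Real.pi : ℂ) * Complex.I * w)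
      (2 * (Real.pi : ℂ) * Complex.I) z := by
    simpa using (hasStrictDerivAt_id z).const_mul (2 * (Real.pi : ℂ) * Complex.I)
  have h2 := Complex.hasStrictDerivAt_exp (2 * (Real.pi : ℂ) * Complex.I * z)
  have h3 : HasStrictDerivAt qexp
      (Complex.exp (2 * (Real.pi : ℂ) * Complex.I * z) * (2 * (Real.pi : ℂ) * Complex.I)) z :=
    h2.comp z h1
  have : Complex.exp (2 * (Real.pi : ℂ) * Complex.I * z) * (2 * (Real.pi : ℂ) * Complex.I)
      = 2 * (Real.pi : ℂ) * Complex.I * qexp z := by rw [qexp]; ring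
  rwa [this] at h3


section
variable {σ : ℂ → ℂ}

lemma Phi_diffOn (hσmaps : Set.MapsTo σ UHP UHP) (hσdiff : DifferentiableOn ℂ σ UHP)
    (hσeq : ∀ z ∈ UHP, σ (z + 1) = σ z + 1) :
    DifferentiableOn ℂ (Phi σ) DStar := by
  intro q₀ hq₀
  refine (DifferentiableAt.differentiableWithinAt ?_)
  obtain ⟨hq0, hq1⟩ := mem_dstar_iff.1 hq₀
  set z₀ := invQ q₀ with hz₀def
  have hz₀ : z₀ ∈ UHP := invQ_mem_uhp hq0 hq1
  have hqz : qexp z₀ = q₀ := qexp_invQ hq0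
  have hc : (2 * (Real.pi : ℂ) * Complex.I * qexp z₀) ≠ 0 :=
    mul_ne_zero two_pi_I_ne_zero (qexp_ne_zero z₀)
  have hE := hasStrictDerivAt_qexp z₀
  set L := hE.localInverse qexp _ z₀ hc with hLdef
  have hFD := hE.hasStrictFDerivAt_equiv hc
  have hL0 : L (qexp z₀) = z₀ := hFD.localInverse_apply_image
  have hLdiff : DifferentiableAt ℂ L q₀ := by
    rw [← hqz]; exact HasDerivAt.differentiableAt (HasStrictDerivAt.hasDerivAt (hE.to_localInverse hc))
  have hLcont : ContinuousAt L q₀ := hLdiff.continuousAt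
  have hRight : ∀ᶠ y in 𝓝 q₀, qexp (L y) = y := by
    rw [← hqz]; exact hFD.eventually_right_inverse
  have hLuhp : ∀ᶠ y in 𝓝 q₀, L y ∈ UHP := by
    have : UHP ∈ 𝓝 (L q₀) := uhp_open.mem_nhds (by rw [← hqz, hL0]; exact hz₀)
    exact hLcont.preimage_mem_nhds this
  have heq : (fun y => qexp (σ (L y))) =ᶠ[𝓝 q₀] Phi σ := by
    filter_upwards [hRight, hLuhp] with y h1 h2
    rw [← Phi_qexp hσmaps hσeq h2, h1]
  refine heq.differentiableAt_iff.1 ?_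
  have hσd : DifferentiableAt ℂ σ (L q₀) := by
    rw [← hqz, hL0]
    exact hσdiff.differentiableAt (uhp_open.mem_nhds hz₀)
  exact ((HasDerivAt.differentiableAt (HasStrictDerivAt.hasDerivAt (hasStrictDerivAt_qexp _))).comp _ hσd).comp q₀ hLdiff

end

lemma half_mem_dstar : (1/2 : ℂ) ∈ DStar := by
  rw [mem_dstar_iff]
  constructor
  · norm_num
  · rw [norm_div]
    simp
    norm_num

lemma quarter_mem_dstar : (1/4 : ℂ) ∈ DStar := by
  rw [mem_dstar_iff]
  constructor
  · norm_num
  · rw [norm_div]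
    simp
    norm_num

lemma disk_automorphism {φ : ℂ → ℂ}
    (hd : DifferentiableOn ℂ φ DStar)
    (hmaps : Set.MapsTo φ DStar DStar)
    (hinj : Set.InjOn φ DStar)
    (hsurj : Set.SurjOn φ DStar DStar) :
    ∃ c : ℂ, ‖c‖ = 1 ∧ ∀ q ∈ DStar, φ q = c * q := by
  set B := Metric.ball (0 : ℂ) 1 with hBdef
  have hBopen : IsOpen B := Metric.isOpen_ball
  have hBpre : IsPreconnected B := (convex_ball (0:ℂ) 1).isPreconnected
  have hB0 : (0 : ℂ) ∈ B := Metric.mem_ball_self one_pos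
  have hBnhds : B ∈ 𝓝 (0 : ℂ) := hBopen.mem_nhds hB0
  have hBD : B \ {0} = DStar := rfl
  have hDB : DStar ⊆ B := fun q hq => hq.1
  have habs_le : ∀ q ∈ DStar, ‖φ q‖ ≤ 1 := fun q hq => le_of_lt (mem_dstar_iff.1 (hmaps hq)).2
  -- extend φ over 0
  set F := Function.update φ 0 (limUnder (𝓝[≠] (0:ℂ)) φ) with hFdef
  have hFφ : ∀ q : ℂ, q ≠ 0 → F q = φ q := fun q h => Function.update_of_ne h _ _
  have hFd : DifferentiableOn ℂ F B := by
    apply Complex.differentiableOn_update_limUnder_of_bddAbove hBnhds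
    · rw [hBD]; exact hd
    · refine ⟨1, ?_⟩
      rintro x ⟨q, hq, rfl⟩
      rw [hBD] at hq
      exact habs_le q hq
  have hF0 : F 0 = 0 := by
    by_contra ha
    have hcont : ContinuousAt F 0 := (hFd.differentiableAt hBnhds).continuousAt
    have hev : ∀ᶠ q in 𝓝[B \ {0}] (0:ℂ), ‖F q‖ ≤ 1 := by
      filter_upwards [self_mem_nhdsWithin] with q hq
      rw [hFφ q (by simpa using hq.2)]
      exact habs_le q hq
    have hnbEq' : 𝓝[B \ {0}] (0:ℂ) = 𝓝[≠] (0:ℂ) := by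
      rw [diff_eq]
      exact nhdsWithin_inter_of_mem (mem_nhdsWithin_of_mem_nhds hBnhds)
    have hnb' : (𝓝[B \ {0}] (0:ℂ)).NeBot := by rw [hnbEq']; infer_instance
    have hle1 : ‖F 0‖ ≤ 1 := by
      have ht : Filter.Tendsto (fun q => ‖F q‖) (𝓝[B \ {0}] (0:ℂ)) (𝓝 ‖F 0‖) :=
        (hcont.norm.tendsto).mono_left nhdsWithin_le_nhds
      exact le_of_tendsto ht hev
    rcases eq_or_lt_of_le hle1 with heq1 | hlt1
    · -- boundary value: max modulus forces constancy
      have hmax : IsMaxOn (norm ∘ F) B 0 := by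
        intro q hq
        show ‖F q‖ ≤ ‖F 0‖
        rcases eq_or_ne q 0 with rfl | hne
        · exact le_rfl
        · rw [hFφ q hne, heq1]
          exact habs_le q ⟨hq, hne⟩
      have hconst := Complex.eqOn_of_isPreconnected_of_isMaxOn_norm hBpre hBopen hFd hB0 hmax
      have h1 : F (1/2:ℂ) = F 0 := hconst (hDB half_mem_dstar)
      have h2 : F (1/4:ℂ) = F 0 := hconst (hDB quarter_mem_dstar)
      have h3 : φ (1/2:ℂ) = φ (1/4:ℂ) := by
        rw [← hFφ _ (by norm_num : (1/2:ℂ) ≠ 0), ← hFφ _ (by norm_num : (1/4:ℂ) ≠ 0), h1, h2]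
      have := hinj half_mem_dstar quarter_mem_dstar h3
      norm_num at this
    · -- interior value: contradicts injectivity via the open mapping theorem
      have haD : F 0 ∈ DStar := mem_dstar_iff.2 ⟨ha, hlt1⟩
      obtain ⟨q₀, hq₀D, hφq₀⟩ := hsurj haD
      obtain ⟨hq₀0, hq₀1⟩ := mem_dstar_iff.1 hq₀D
      have habsq₀ : 0 < ‖q₀‖ := norm_pos_iff.2 hq₀0
      have hFq₀ : F q₀ = F 0 := by rw [hFφ q₀ hq₀0]; exact hφq₀
      have hana0 : AnalyticAt ℂ F 0 := hFd.analyticAt hBnhds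
      have hanaq₀ : AnalyticAt ℂ F q₀ := hFd.analyticAt (hBopen.mem_nhds (hDB hq₀D))
      have h0map : 𝓝 (F 0) ≤ Filter.map F (𝓝 0) := by
        rcases hana0.eventually_constant_or_nhds_le_map_nhds with hconst | h
        · exfalso
          have hev2 : ∀ᶠ q in 𝓝[≠] (0:ℂ),
              F q = F 0 ∧ q ∈ B ∧ ‖q‖ < ‖q₀‖ := by
            filter_upwards [hconst.filter_mono nhdsWithin_le_nhds,
              mem_nhdsWithin_of_mem_nhds hBnhds,
              mem_nhdsWithin_of_mem_nhds (Metric.ball_mem_nhds (0:ℂ) habsq₀)] with q h1 h2 h3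
            exact ⟨h1, h2, by rwa [Metric.mem_ball, Complex.dist_eq, sub_zero] at h3⟩
          obtain ⟨q, ⟨hqa, hqB, hqlt⟩, hqne⟩ := (hev2.and self_mem_nhdsWithin).exists
          have hqne' : q ≠ 0 := hqne
          have hqD : q ∈ DStar := ⟨hqB, hqne'⟩
          have heqq : φ q = φ q₀ := by rw [← hFφ q hqne', hqa, hφq₀]
          have := hinj hqD hq₀D heqq
          rw [this] at hqlt
          exact lt_irrefl _ hqlt
        · exact h
      have hq0map : 𝓝 (F 0) ≤ Filter.map F (𝓝 q₀) := by
        rcases hanaq₀.eventually_constant_or_nhds_le_map_nhds with hconst | h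
        · exfalso
          have hev2 : ∀ᶠ q in 𝓝[≠] q₀, F q = F 0 ∧ q ∈ DStar := by
            filter_upwards [hconst.filter_mono nhdsWithin_le_nhds,
              mem_nhdsWithin_of_mem_nhds (dstar_open.mem_nhds hq₀D)] with q h1 h2
            exact ⟨h1.trans hFq₀, h2⟩
          obtain ⟨q, ⟨hqa, hqD⟩, hqne⟩ := (hev2.and self_mem_nhdsWithin).exists
          have heqq : φ q = φ q₀ := by rw [← hFφ q (mem_dstar_iff.1 hqD).1, hqa, hφq₀]
          exact hqne (hinj hqD hq₀D heqq)
        · rwa [hFq₀] at h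
      set r := min (‖q₀‖ / 2) (1 - ‖q₀‖) with hrdef
      have hrpos : 0 < r := lt_min (by linarith) (by linarith)
      have hr1 : r ≤ ‖q₀‖ / 2 := min_le_left _ _
      have hr2 : r ≤ 1 - ‖q₀‖ := min_le_right _ _
      have hV0 : F '' Metric.ball 0 r ∈ 𝓝 (F 0) :=
        h0map (Filter.image_mem_map (Metric.ball_mem_nhds _ hrpos))
      have hV1 : F '' Metric.ball q₀ r ∈ 𝓝 (F 0) :=
        hq0map (Filter.image_mem_map (Metric.ball_mem_nhds _ hrpos))
      obtain ⟨b, hbmem, hbne⟩ : ∃ b, b ∈ (F '' Metric.ball 0 r ∩ F '' Metric.ball q₀ r)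
          ∧ b ≠ F 0 := by
        have h1 : (F '' Metric.ball 0 r ∩ F '' Metric.ball q₀ r) ∈ 𝓝[≠] (F 0) :=
          mem_nhdsWithin_of_mem_nhds (Filter.inter_mem hV0 hV1)
        obtain ⟨b, hb⟩ := Filter.nonempty_of_mem (Filter.inter_mem h1 self_mem_nhdsWithin)
        exact ⟨b, hb.1, hb.2⟩
      obtain ⟨⟨u, hu, hub⟩, ⟨v, hv, hvb⟩⟩ := hbmem
      have hu' : ‖u‖ < r := by rwa [Metric.mem_ball, Complex.dist_eq, sub_zero] at hu
      have hv' : ‖v - q₀‖ < r := by rwa [Metric.mem_ball, Complex.dist_eq] at hv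
      have hune : u ≠ 0 := by rintro rfl; exact hbne hub.symm
      have huB : u ∈ B := by
        rw [hBdef, Metric.mem_ball, Complex.dist_eq, sub_zero]
        calc ‖u‖ < r := hu'
          _ ≤ ‖q₀‖ / 2 := hr1
          _ < 1 := by linarith
      have hvabs : ‖v‖ < 1 := by
        calc ‖v‖ = ‖(v - q₀) + q₀‖ := by ring_nf
          _ ≤ ‖v - q₀‖ + ‖q₀‖ := norm_add_le _ _
          _ < r + ‖q₀‖ := by linarith
          _ ≤ 1 := by linarith
      have hvne : v ≠ 0 := by
        rintro rfl
        rw [zero_sub, norm_neg] at hv'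
        linarith
      have hvB : v ∈ B := by rwa [hBdef, Metric.mem_ball, Complex.dist_eq, sub_zero]
      have huv : u ≠ v := by
        rintro rfl
        have : ‖q₀‖ ≤ ‖u - q₀‖ + ‖u‖ := by
          calc ‖q₀‖ = ‖(q₀ - u) + u‖ := by ring_nf
            _ ≤ ‖q₀ - u‖ + ‖u‖ := norm_add_le _ _
            _ = ‖u - q₀‖ + ‖u‖ := by rw [← norm_neg]; ring_nf
        linarith
      have heqq : φ u = φ v := by rw [← hFφ u hune, ← hFφ v hvne, hub, hvb]
      exact huv (hinj ⟨huB, hune⟩ ⟨hvB, hvne⟩ heqq)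
  have hFmaps : Set.MapsTo F B B := by
    intro q hq
    rcases eq_or_ne q 0 with rfl | hne
    · rw [hF0]; exact hB0
    · rw [hFφ q hne]; exact hDB (hmaps ⟨hq, hne⟩)
  have hFinj : Set.InjOn F B := by
    intro q₁ h₁ q₂ h₂ h
    rcases eq_or_ne q₁ 0 with rfl | hne₁ <;> rcases eq_or_ne q₂ 0 with rfl | hne₂
    · rfl
    · rw [hF0, hFφ q₂ hne₂] at h
      exact absurd h.symm (mem_dstar_iff.1 (hmaps ⟨h₂, hne₂⟩)).1
    · rw [hF0, hFφ q₁ hne₁] at h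
      exact absurd h (mem_dstar_iff.1 (hmaps ⟨h₁, hne₁⟩)).1
    · rw [hFφ q₁ hne₁, hFφ q₂ hne₂] at h
      exact hinj ⟨h₁, hne₁⟩ ⟨h₂, hne₂⟩ h
  have hFsurj : Set.SurjOn F B B := by
    intro w hw
    rcases eq_or_ne w 0 with rfl | hne
    · exact ⟨0, hB0, hF0⟩
    · obtain ⟨q, hq, hφq⟩ := hsurj (show w ∈ DStar from ⟨hw, hne⟩)
      exact ⟨q, hDB hq, by rw [hFφ q (mem_dstar_iff.1 hq).1]; exact hφq⟩
  have hFopen : ∀ s ⊆ B, IsOpen s → IsOpen (F '' s) := by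
    have hFanal : AnalyticOnNhd ℂ F B := hFd.analyticOnNhd hBopen
    rcases hFanal.is_constant_or_isOpen hBpre with ⟨w, hw⟩ | h
    · exfalso
      have h1 : F (1/2 : ℂ) = w := hw _ (hDB half_mem_dstar)
      have h2 : F (1/4 : ℂ) = w := hw _ (hDB quarter_mem_dstar)
      have := hFinj (hDB half_mem_dstar) (hDB quarter_mem_dstar) (h1.trans h2.symm)
      norm_num at this
    · exact h
  -- the inverse map
  set G := Function.invFunOn F B with hGdef
  have hGmem : ∀ w ∈ B, G w ∈ B := fun w hw => Function.invFunOn_mem (hFsurj hw)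
  have hFG : ∀ w ∈ B, F (G w) = w := fun w hw => Function.invFunOn_eq (hFsurj hw)
  have hGF : ∀ q ∈ B, G (F q) = q := fun q hq => hFinj.leftInvOn_invFunOn hq
  have hG0 : G 0 = 0 := by have := hGF 0 hB0; rwa [hF0] at this
  have hGcont : ∀ w ∈ B, ContinuousAt G w := by
    intro w hw
    rw [continuousAt_def]
    intro U hU
    obtain ⟨V, hVU, hVopen, hVmem⟩ := mem_nhds_iff.1 hU
    have himg : IsOpen (F '' (V ∩ B)) := hFopen _ (inter_subset_right) (hVopen.inter hBopen)
    have hwmem : w ∈ F '' (V ∩ B) := ⟨G w, ⟨hVmem, hGmem w hw⟩, hFG w hw⟩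
    refine mem_nhds_iff.2 ⟨F '' (V ∩ B), ?_, himg, hwmem⟩
    rintro x ⟨u, ⟨huV, huB⟩, rfl⟩
    show G (F u) ∈ U
    rw [hGF u huB]
    exact hVU huV
  have hFanal : AnalyticOnNhd ℂ F B := hFd.analyticOnNhd hBopen
  have hderiv_anal : AnalyticOnNhd ℂ (deriv F) B := hFanal.deriv
  have hreg : ∀ w ∈ B, deriv F (G w) ≠ 0 → DifferentiableAt ℂ G w := by
    intro w hw hne
    have hqB : G w ∈ B := hGmem w hw
    have hFq : F (G w) = w := hFG w hw
    have hstrict : HasStrictDerivAt F (deriv F (G w)) (G w) := by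
      have h1 := (hFanal _ hqB).hasStrictFDerivAt.hasStrictDerivAt
      rwa [fderiv_apply_one_eq_deriv] at h1
    set L := hstrict.localInverse F _ (G w) hne with hLdef
    have hFDq := hstrict.hasStrictFDerivAt_equiv hne
    have hL0 : L (F (G w)) = G w := hFDq.localInverse_apply_image
    have hLdiffw : DifferentiableAt ℂ L w := by
      rw [← hFq]; exact HasDerivAt.differentiableAt (HasStrictDerivAt.hasDerivAt (hstrict.to_localInverse hne))
    have hRight : ∀ᶠ y in 𝓝 w, F (L y) = y := by
      rw [← hFq]; exact hFDq.eventually_right_inverse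
    have hLB : ∀ᶠ y in 𝓝 w, L y ∈ B := by
      apply hLdiffw.continuousAt.preimage_mem_nhds
      refine hBopen.mem_nhds ?_
      rw [← hFq, hL0]; exact hqB
    have heqGL : G =ᶠ[𝓝 w] L := by
      filter_upwards [hRight, hLB, hBopen.mem_nhds hw] with y h1 h2 h3
      exact hFinj (hGmem y h3) h2 (by rw [hFG y h3, h1])
    exact heqGL.differentiableAt_iff.2 hLdiffw
  have hderiv_ne : ∃ q ∈ B, deriv F q ≠ 0 := by
    by_contra hcc
    push_neg at hcc
    have hconst : ∀ q ∈ B, F q = F 0 := by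
      intro q hq
      refine (convex_ball (0:ℂ) 1).is_const_of_fderivWithin_eq_zero hFd ?_ hq hB0
      intro x hx
      rw [fderivWithin_of_isOpen hBopen hx]
      refine ContinuousLinearMap.ext fun y => ?_
      rw [fderiv_eq_smul_deriv, hcc x hx]
      simp
    have h3 : φ (1/2:ℂ) = φ (1/4:ℂ) := by
      rw [← hFφ _ (by norm_num : (1/2:ℂ) ≠ 0), ← hFφ _ (by norm_num : (1/4:ℂ) ≠ 0),
        hconst _ (hDB half_mem_dstar), hconst _ (hDB quarter_mem_dstar)]
    have := hinj half_mem_dstar quarter_mem_dstar h3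
    norm_num at this
  have hisol : ∀ c ∈ B, ∀ᶠ x in 𝓝[≠] c, deriv F x ≠ 0 := by
    intro c hc
    rcases (hderiv_anal c hc).eventually_eq_zero_or_eventually_ne_zero with h | h
    · exfalso
      have hzero := hderiv_anal.eqOn_zero_of_preconnected_of_eventuallyEq_zero hBpre hc h
      obtain ⟨q, hq, hqne⟩ := hderiv_ne
      exact hqne (hzero hq)
    · exact h
  have hGdiff : DifferentiableOn ℂ G B := by
    intro w hw
    refine DifferentiableAt.differentiableWithinAt ?_
    by_cases hcase : deriv F (G w) ≠ 0
    · exact hreg w hw hcase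
    push_neg at hcase
    have hqB : G w ∈ B := hGmem w hw
    have hFq : F (G w) = w := hFG w hw
    have h1 := hisol (G w) hqB
    rw [eventually_nhdsWithin_iff] at h1
    obtain ⟨ε, hεpos, hball⟩ :=
      Metric.eventually_nhds_iff_ball.1 (h1.and (hBopen.eventually_mem hqB))
    have hεsub : Metric.ball (G w) ε ⊆ B := fun x hx => (hball x hx).2
    have hballne : ∀ x ∈ Metric.ball (G w) ε, x ≠ G w → deriv F x ≠ 0 :=
      fun x hx h => (hball x hx).1 h
    set s := F '' Metric.ball (G w) ε with hsdef
    have hsopen : IsOpen s := hFopen _ hεsub Metric.isOpen_ball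
    have hws : w ∈ s := ⟨G w, Metric.mem_ball_self hεpos, hFq⟩
    have hsB : s ⊆ B := by
      rintro y ⟨x, hx, rfl⟩
      exact hFmaps (hεsub hx)
    have hGd' : DifferentiableOn ℂ G (s \ {w}) := by
      rintro y hy
      have hyB : y ∈ B := hsB hy.1
      obtain ⟨x, hx, hxy⟩ := hy.1
      have hGy : G y = x := hFinj (hGmem y hyB) (hεsub hx) (by rw [hFG y hyB, hxy])
      have hxq : x ≠ G w := by
        rintro rfl
        exact hy.2 (show y ∈ {w} from by rw [mem_singleton_iff, ← hxy, hFq])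
      have := hreg y hyB (by rw [hGy]; exact hballne x hx hxq)
      exact this.differentiableWithinAt
    have hbdd : BddAbove (norm ∘ G '' (s \ {w})) := by
      refine ⟨1, ?_⟩
      rintro t ⟨y, hy, rfl⟩
      exact le_of_lt (mem_ball_zero_iff.1 (hGmem y (hsB hy.1)))
    have hupd := Complex.differentiableOn_update_limUnder_of_bddAbove
      (hsopen.mem_nhds hws) hGd' hbdd
    have hlim : limUnder (𝓝[≠] w) G = G w :=
      ((hGcont w hw).tendsto.mono_left nhdsWithin_le_nhds).limUnder_eq
    rw [hlim, Function.update_eq_self] at hupd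
    exact hupd.differentiableAt (hsopen.mem_nhds hws)
  -- Schwarz both ways
  have hSF : ∀ q ∈ B, ‖F q‖ ≤ ‖q‖ := fun q hq =>
    Complex.norm_le_norm_of_mapsTo_ball_self hFd (hFmaps.mono_right Metric.ball_subset_closedBall) hF0 (mem_ball_zero_iff.1 hq)
  have hGmaps : Set.MapsTo G B B := fun w hw => hGmem w hw
  have hSG : ∀ w ∈ B, ‖G w‖ ≤ ‖w‖ := fun w hw =>
    Complex.norm_le_norm_of_mapsTo_ball_self hGdiff (hGmaps.mono_right Metric.ball_subset_closedBall) hG0 (mem_ball_zero_iff.1 hw)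
  have habs_eq : ∀ q ∈ B, ‖F q‖ = ‖q‖ := by
    intro q hq
    refine le_antisymm (hSF q hq) ?_
    have := hSG (F q) (hFmaps hq)
    rwa [hGF q hq] at this
  -- the quotient function
  set ψ := Function.update (fun q => F q / q) 0
      (limUnder (𝓝[≠] (0:ℂ)) (fun q => F q / q)) with hψdef
  have hψq : ∀ q : ℂ, q ≠ 0 → ψ q = F q / q := fun q h => Function.update_of_ne h _ _
  have habsψ : ∀ q ∈ B, q ≠ 0 → ‖ψ q‖ = 1 := by
    intro q hq hne
    rw [hψq q hne, norm_div, habs_eq q hq, div_self]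
    simpa using hne
  have hψd : DifferentiableOn ℂ ψ B := by
    apply Complex.differentiableOn_update_limUnder_of_bddAbove hBnhds
    · intro q hq
      have hne : q ≠ (0:ℂ) := by simpa using hq.2
      exact ((hFd q hq.1).mono diff_subset).div differentiableWithinAt_id hne
    · refine ⟨1, ?_⟩
      rintro x ⟨q, hq, rfl⟩
      have hne : q ≠ (0:ℂ) := by simpa using hq.2
      have h1 := habsψ q hq.1 hne
      rw [hψq q hne] at h1
      show ‖F q / q‖ ≤ 1
      rw [h1]
  have hnbEq : 𝓝[B \ {0}] (0:ℂ) = 𝓝[≠] (0:ℂ) := by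
    rw [diff_eq]
    exact nhdsWithin_inter_of_mem (mem_nhdsWithin_of_mem_nhds hBnhds)
  have hnb : (𝓝[B \ {0}] (0:ℂ)).NeBot := by rw [hnbEq]; infer_instance
  have habsψ0 : ‖ψ 0‖ = 1 := by
    have hcont : ContinuousAt ψ 0 :=
      (hψd.differentiableAt (hBopen.mem_nhds hB0)).continuousAt
    have h1 : Filter.Tendsto (fun q => ‖ψ q‖) (𝓝[B \ {0}] (0:ℂ))
        (𝓝 (‖ψ 0‖)) :=
      (continuous_norm.continuousAt.comp hcont).tendsto.mono_left nhdsWithin_le_nhds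
    have h2 : Filter.Tendsto (fun q => ‖ψ q‖) (𝓝[B \ {0}] (0:ℂ)) (𝓝 1) := by
      refine Filter.Tendsto.congr' ?_ tendsto_const_nhds
      filter_upwards [self_mem_nhdsWithin] with q hq
      exact (habsψ q hq.1 hq.2).symm
    exact tendsto_nhds_unique h1 h2
  have hmax : IsMaxOn (norm ∘ ψ) B 0 := by
    intro q hq
    show ‖ψ q‖ ≤ ‖ψ 0‖
    rcases eq_or_ne q 0 with rfl | hne
    · exact le_rfl
    · have e1 : ‖ψ q‖ = 1 := habsψ q hq hne
      have e2 : ‖ψ 0‖ = 1 := habsψ0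
      rw [e1, e2]
  have heq := Complex.eqOn_of_isPreconnected_of_isMaxOn_norm hBpre hBopen hψd hB0 hmax
  refine ⟨ψ 0, habsψ0, ?_⟩
  intro q hq
  have h1 : ψ q = ψ 0 := heq (hDB hq)
  have hne := (mem_dstar_iff.1 hq).1
  rw [hψq q hne, div_eq_iff hne] at h1
  rw [← hFφ q hne]
  exact h1
end CTI

/-- A canonical self-map of `ℍ` intertwining the translation `z ↦ z + 1` with itself is a
real translation `σ(z) = z + d`. -/
theorem canonical_translation_intertwiner
    (σ : ℂ → ℂ)
    (hσmaps : Set.MapsTo σ UHP UHP)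
    (hσdiff : DifferentiableOn ℂ σ UHP)
    (hσeq : ∀ z ∈ UHP, σ (z + 1) = σ z + 1)
    (hcan₁ : ∀ z ∈ UHP, ∀ w ∈ UHP,
      ((∃ m : ℤ, σ z = σ w + (m : ℂ)) ↔ (∃ m : ℤ, z - w = (m : ℂ))))
    (hcan₂ : ∀ ζ ∈ UHP, ∃ z ∈ UHP, ∃ m : ℤ, ζ + (m : ℂ) = σ z) :
    ∃ d : ℝ, ∀ z ∈ UHP, σ z = z + (d : ℝ) := by
  classical
  obtain ⟨c, hc1, hc2⟩ := CTI.disk_automorphism (CTI.Phi_diffOn hσmaps hσdiff hσeq)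
      (fun q hq => CTI.Phi_mem_dstar hσmaps hq) (CTI.Phi_injOn hσmaps hcan₁)
      (CTI.Phi_surjOn hσmaps hσeq hcan₂)
  have hqc : ∀ z ∈ UHP, CTI.qexp (σ z) = c * CTI.qexp z := by
    intro z hz
    rw [← CTI.Phi_qexp hσmaps hσeq hz]
    exact hc2 _ (CTI.qexp_mem_dstar hz)
  have hc0 : c ≠ 0 := by intro h; rw [h] at hc1; simp at hc1
  set θ := (Complex.log c).im with hθdef
  have hlogc : Complex.log c = (θ : ℂ) * Complex.I := by
    apply Complex.ext
    · simp [Complex.log_re, hc1]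
    · simp [hθdef]
  have hcexp : c = Complex.exp ((θ : ℂ) * Complex.I) := by
    rw [← hlogc, Complex.exp_log hc0]
  set d₀ : ℝ := θ / (2 * Real.pi) with hd₀def
  have hd₀ : ((d₀ : ℝ) : ℂ) = (θ : ℂ) / (2 * (Real.pi : ℂ)) := by
    rw [hd₀def]; push_cast; ring
  have key : ∀ z ∈ UHP, ∃ n : ℤ, σ z - z - (d₀ : ℂ) = (n : ℂ) := by
    intro z hz
    have h1 : CTI.qexp (σ z) = CTI.qexp (z + (d₀ : ℂ)) := by
      rw [hqc z hz, hcexp, CTI.qexp, CTI.qexp, ← Complex.exp_add]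
      congr 1
      rw [hd₀]
      have hπ : (Real.pi : ℂ) ≠ 0 := by exact_mod_cast Real.pi_ne_zero
      field_simp
      ring
    obtain ⟨n, hn⟩ := CTI.qexp_eq_qexp_iff.1 h1
    exact ⟨n, by linear_combination hn⟩
  have hkcont : ∀ z ∈ UHP, ContinuousAt (fun w => σ w - w - (d₀ : ℂ)) z := by
    intro z hz
    exact (((hσdiff.differentiableAt (CTI.uhp_open.mem_nhds hz)).continuousAt).sub
      continuousAt_id).sub continuousAt_const
  have hlocal : ∀ z₁ ∈ UHP, ∀ᶠ z in 𝓝 z₁,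
      z ∈ UHP ∧ σ z - z - (d₀ : ℂ) = σ z₁ - z₁ - (d₀ : ℂ) := by
    intro z₁ hz₁
    have h1 : ∀ᶠ z in 𝓝 z₁,
        (σ z - z - (d₀ : ℂ)) ∈ Metric.ball (σ z₁ - z₁ - (d₀ : ℂ)) 1 :=
      (hkcont z₁ hz₁).preimage_mem_nhds (Metric.ball_mem_nhds _ one_pos)
    filter_upwards [h1, CTI.uhp_open.eventually_mem hz₁] with z hb hu
    refine ⟨hu, ?_⟩
    obtain ⟨n, hn⟩ := key z hu
    obtain ⟨n₁, hn₁⟩ := key z₁ hz₁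
    have hdiff : (σ z - z - (d₀ : ℂ)) - (σ z₁ - z₁ - (d₀ : ℂ)) = ((n - n₁ : ℤ) : ℂ) := by
      push_cast
      linear_combination hn - hn₁
    have hlt : ‖((n - n₁ : ℤ) : ℂ)‖ < 1 := by
      rw [← hdiff]
      rw [Metric.mem_ball, Complex.dist_eq] at hb
      exact hb
    rw [Complex.norm_intCast] at hlt
    have hzero : n - n₁ = 0 := by
      rw [Int.abs_lt_one_iff.symm]
      exact_mod_cast hlt
    have : n = n₁ := by omega
    rw [this] at hn
    rw [hn, hn₁]
  obtain ⟨n₀, hn₀⟩ := key Complex.I CTI.I_mem_uhp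
  refine ⟨d₀ + n₀, ?_⟩
  intro z hz
  have hkz : σ z - z - (d₀ : ℂ) = σ Complex.I - Complex.I - (d₀ : ℂ) := by
    by_contra hne
    set u : Set ℂ :=
      {w | w ∈ UHP ∧ σ w - w - (d₀ : ℂ) = σ Complex.I - Complex.I - (d₀ : ℂ)} with hudef
    set v : Set ℂ :=
      {w | w ∈ UHP ∧ σ w - w - (d₀ : ℂ) ≠ σ Complex.I - Complex.I - (d₀ : ℂ)} with hvdef
    have hu_open : IsOpen u := by
      rw [isOpen_iff_mem_nhds]
      intro w hw
      have h := hlocal w hw.1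
      have : ∀ᶠ x in 𝓝 w, x ∈ u := by
        filter_upwards [h] with x hx
        exact ⟨hx.1, hx.2.trans hw.2⟩
      exact this
    have hv_open : IsOpen v := by
      rw [isOpen_iff_mem_nhds]
      intro w hw
      have h := hlocal w hw.1
      have : ∀ᶠ x in 𝓝 w, x ∈ v := by
        filter_upwards [h] with x hx
        exact ⟨hx.1, fun hxx => hw.2 (hx.2.symm.trans hxx)⟩
      exact this
    have hcover : UHP ⊆ u ∪ v := by
      intro w hw
      by_cases h : σ w - w - (d₀ : ℂ) = σ Complex.I - Complex.I - (d₀ : ℂ)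
      · exact Or.inl ⟨hw, h⟩
      · exact Or.inr ⟨hw, h⟩
    have h1 : (UHP ∩ u).Nonempty := ⟨Complex.I, CTI.I_mem_uhp, CTI.I_mem_uhp, rfl⟩
    have h2 : (UHP ∩ v).Nonempty := ⟨z, hz, hz, hne⟩
    obtain ⟨y, hy⟩ := CTI.uhp_preconn u v hu_open hv_open hcover h1 h2
    exact hy.2.2.2 hy.2.1.2
  rw [hn₀] at hkz
  push_cast
  linear_combination hkz
end
end

section
/- Let F : ℂ → ℂ be entire with F(z + 1) = F(z) + 1 for all z ∈ ℂ. Assume F is canonical, i.e.: for all z, w ∈ ℂ, F(z) − F(w) ∈ ℤ holds if and only if z − w ∈ ℤ; and for every a ∈ ℂ there exist z ∈ ℂ and m ∈ ℤ with F(z) = a + m. Then there exists c ∈ ℂ with F(z) = z + c for all z ∈ ℂ. -/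
open Complex Filter Set Topology

noncomputable section

/-- An entire function with polynomial growth is a polynomial. -/
theorem entire_poly_growth_is_poly :
    ∀ (n : ℕ) (f : ℂ → ℂ), Differentiable ℂ f →
    ∀ C R : ℝ, (∀ z : ℂ, R ≤ ‖z‖ → ‖f z‖ ≤ C * ‖z‖ ^ n) →
    ∃ p : Polynomial ℂ, ∀ z, f z = p.eval z := by
  intro n
  induction n with
  | zero =>
    intro f hf C R hg
    -- f is bounded
    obtain ⟨M, hM⟩ := (isCompact_closedBall (0:ℂ) |R|).exists_bound_of_continuousOn
      hf.continuous.continuousOn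
    have hb : ∃ c, ∀ z, f z = c := by
      apply hf.exists_const_forall_eq_of_bounded
      rw [Metric.isBounded_iff_subset_closedBall 0]
      refine ⟨max M (C * 1), ?_⟩
      rintro w ⟨z, rfl⟩
      simp only [Metric.mem_closedBall, dist_zero_right]
      rcases le_or_gt ‖z‖ |R| with h | h
      · exact le_max_of_le_left (hM z (by simpa [Metric.mem_closedBall] using h))
      · have := hg z ((le_abs_self R).trans h.le)
        simpa using le_max_of_le_right (by simpa using this)
    obtain ⟨c, hc⟩ := hb
    exact ⟨Polynomial.C c, by simp [hc]⟩
  | succ n ih =>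
    intro f hf C R hg
    set g : ℂ → ℂ := dslope f 0 with hgdef
    have hgd : Differentiable ℂ g := by
      rw [← differentiableOn_univ]
      rw [Complex.differentiableOn_dslope (by simp : (univ : Set ℂ) ∈ nhds (0:ℂ))]
      exact hf.differentiableOn
    have hgrow : ∀ z : ℂ, max (max R 1) 1 ≤ ‖z‖ → ‖g z‖ ≤ (C + ‖f 0‖) * ‖z‖ ^ n := by
      intro z hz
      have hz1 : (1:ℝ) ≤ ‖z‖ := le_trans (le_max_right _ _) hz
      have hzR : R ≤ ‖z‖ := le_trans ((le_max_left R 1).trans (le_max_left _ _)) hz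
      have hz0 : z ≠ 0 := by
        intro h; rw [h] at hz1; norm_num at hz1
      have : g z = (f z - f 0) / z := by
        rw [hgdef, dslope_of_ne _ hz0, slope_def_field]
        field_simp
        ring
      rw [this]
      rw [norm_div]
      rw [div_le_iff₀ (by positivity)]
      calc ‖f z - f 0‖ ≤ ‖f z‖ + ‖f 0‖ := norm_sub_le _ _
        _ ≤ C * ‖z‖ ^ (n+1) + ‖f 0‖ * ‖z‖ ^ (n+1) := by
            gcongr
            · exact hg z hzR
            · exact le_mul_of_one_le_right (norm_nonneg _) (one_le_pow₀ hz1)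
        _ = (C + ‖f 0‖) * ‖z‖ ^ n * ‖z‖ := by ring
    obtain ⟨p, hp⟩ := ih g hgd (C + ‖f 0‖) (max (max R 1) 1) hgrow
    refine ⟨Polynomial.C (f 0) + Polynomial.X * p, fun z => ?_⟩
    have h1 : (z - 0) • g z = f z - f 0 := sub_smul_dslope f 0 z
    simp only [sub_zero, smul_eq_mul] at h1
    have : f z = f 0 + z * g z := by linear_combination -h1
    rw [this, hp z]
    simp

section
open Polynomial

theorem poly_translation (p : Polynomial ℂ) (h : ∀ z : ℂ, p.eval (z + 1) = p.eval z + 1) :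
    ∃ b : ℂ, ∀ z : ℂ, p.eval z = z + b := by
  have hcomp : p.comp (X + C 1) = p + C 1 := by
    apply Polynomial.funext
    intro z
    simp [eval_comp, h z]
  have hq : (derivative p).comp (X + C 1) = derivative p := by
    have := congrArg derivative hcomp
    rwa [derivative_comp, derivative_add, derivative_C, add_zero, derivative_add,
      derivative_X, derivative_C, add_zero, one_mul] at this
  set q := derivative p with hqdef
  have hqper : ∀ z : ℂ, q.eval (z + 1) = q.eval z := by
    intro z
    conv_rhs => rw [← hq]
    simp [eval_comp]
  have hqnat : ∀ k : ℕ, q.eval (k : ℂ) = q.eval 0 := by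
    intro k
    induction k with
    | zero => simp
    | succ k ih => push_cast; rw [hqper (k : ℂ), ih]
  have hqC : q = C (q.eval 0) := by
    have hz : q - C (q.eval 0) = 0 := by
      apply Polynomial.eq_zero_of_infinite_isRoot
      apply Set.infinite_of_injective_forall_mem (f := fun k : ℕ => (k : ℂ))
        (Nat.cast_injective)
      intro k
      simp only [Polynomial.IsRoot, Set.mem_setOf_eq, eval_sub, eval_C, hqnat k, sub_self]
    exact sub_eq_zero.mp hz
  set a := q.eval 0 with ha
  have hder : derivative (p - C a * X) = 0 := by
    rw [derivative_sub, derivative_C_mul, derivative_X, mul_one, ← hqdef, hqC]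
    exact sub_self _
  have hpC : p - C a * X = C ((p - C a * X).coeff 0) :=
    Polynomial.eq_C_of_derivative_eq_zero hder
  set b := (p - C a * X).coeff 0 with hb
  have hpeval : ∀ z : ℂ, p.eval z = a * z + b := by
    intro z
    have := congrArg (Polynomial.eval z) hpC
    simp only [eval_sub, eval_mul, eval_C, eval_X] at this
    linear_combination this
  have ha1 : a = 1 := by
    have h0 := h 0
    rw [show (0:ℂ) + 1 = 1 by ring, hpeval 0, hpeval 1] at h0
    linear_combination h0
  exact ⟨b, fun z => by rw [hpeval z, ha1, one_mul]⟩


end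

/-- A canonical entire map intertwining `z ↦ z + 1` with itself is a translation `F(z) = z + c`. -/
theorem canonical_entire_translation_intertwiner
    (F : ℂ → ℂ)
    (hF : Differentiable ℂ F)
    (hFeq : ∀ z : ℂ, F (z + 1) = F z + 1)
    (hcan₁ : ∀ z w : ℂ, ((∃ m : ℤ, F z - F w = (m : ℂ)) ↔ (∃ m : ℤ, z - w = (m : ℂ))))
    (hcan₂ : ∀ a : ℂ, ∃ z : ℂ, ∃ m : ℤ, F z = a + (m : ℂ)) :
    ∃ c : ℂ, ∀ z : ℂ, F z = z + c := by
  classical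
  -- F (z + m) = F z + m for integers m
  have hFZ : ∀ (z : ℂ) (m : ℤ), F (z + m) = F z + m := by
    intro z m
    induction m using Int.induction_on with
    | zero => simp
    | succ k ih =>
      have : (((k : ℤ) + 1 : ℤ) : ℂ) = (k : ℂ) + 1 := by push_cast; ring
      rw [this, show z + ((k:ℂ) + 1) = (z + (k : ℤ)) + 1 by push_cast; ring, hFeq]
      rw [ih]; push_cast; ring
    | pred k ih =>
      have hc : ((-(k : ℤ) - 1 : ℤ) : ℂ) = -(k : ℂ) - 1 := by push_cast; ring
      have h1 := hFeq (z + (-(k:ℂ) - 1))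
      rw [show z + (-(k:ℂ) - 1) + 1 = z + ((-(k:ℤ) : ℤ) : ℂ) by push_cast; ring] at h1
      rw [ih] at h1
      rw [hc]
      push_cast at h1 ⊢
      linear_combination -h1
  have hinj : Function.Injective F := by
    intro z w hzw
    obtain ⟨m, hm⟩ := (hcan₁ z w).mp ⟨0, by rw [hzw]; simp⟩
    have hz : z = w + (m : ℂ) := by linear_combination hm
    rw [hz, hFZ w m] at hzw
    have : (m : ℂ) = 0 := by linear_combination hzw
    rw [hz, this, add_zero]
  have hsurj : Function.Surjective F := by
    intro a
    obtain ⟨z, m, hm⟩ := hcan₂ a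
    refine ⟨z - m, ?_⟩
    have := hFZ (z - m) m
    rw [show z - (m:ℂ) + (m:ℂ) = z by ring, hm] at this
    linear_combination -this
  have hopen : IsOpenMap F := by
    have hA : AnalyticOnNhd ℂ F univ := fun z _ => hF.analyticAt z
    rcases hA.is_constant_or_isOpen isPreconnected_univ with ⟨w, hw⟩ | hop
    · exfalso
      have h01 : (0 : ℂ) = 1 := hinj ((hw 0 trivial).trans (hw 1 trivial).symm)
      norm_num at h01
    · intro s hs
      simpa using hop s (subset_univ s) hs
  -- F is a homeomorphism, hence proper
  have hcoc : Tendsto F (cocompact ℂ) (cocompact ℂ) := by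
    let e : ℂ ≃ ℂ := Equiv.ofBijective F ⟨hinj, hsurj⟩
    let h : ℂ ≃ₜ ℂ := e.toHomeomorphOfContinuousOpen hF.continuous hopen
    have : Filter.map F (cocompact ℂ) = cocompact ℂ := h.map_cocompact
    exact Filter.Tendsto.mono_right tendsto_map this.le
  have hnorm : Tendsto (fun z => ‖F z‖) (cocompact ℂ) atTop :=
    tendsto_norm_cocompact_atTop.comp hcoc
  have hbig : ∀ M : ℝ, ∃ R : ℝ, 0 < R ∧ ∀ z : ℂ, R ≤ ‖z‖ → M ≤ ‖F z‖ := by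
    intro M
    have hev : {z : ℂ | M ≤ ‖F z‖} ∈ cocompact ℂ := hnorm.eventually_ge_atTop M
    obtain ⟨K, hK, hKs⟩ := mem_cocompact.mp hev
    obtain ⟨r, hr⟩ := hK.isBounded.subset_closedBall 0
    refine ⟨max r 0 + 1, by positivity, fun z hz => ?_⟩
    apply hKs
    intro hzK
    have : ‖z‖ ≤ r := by simpa [Metric.mem_closedBall] using hr hzK
    have : ‖z‖ ≤ max r 0 := le_trans this (le_max_left _ _)
    linarith
  obtain ⟨R₁, hR₁pos, hR₁⟩ := hbig 1
  -- the function W w = (F (1/w))⁻¹, with W 0 = 0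
  set W : ℂ → ℂ := fun w => if w = 0 then 0 else (F w⁻¹)⁻¹ with hWdef
  have hstep : ∀ w : ℂ, w ≠ 0 → ‖w‖ < R₁⁻¹ → 1 ≤ ‖F w⁻¹‖ := by
    intro w hw hwlt
    apply hR₁
    rw [norm_inv]
    rw [le_inv_comm₀ hR₁pos (norm_pos_iff.mpr hw)]
    exact hwlt.le
  have hWdiff : ∀ᶠ w in 𝓝[≠] (0:ℂ), DifferentiableAt ℂ W w := by
    have hball : ∀ᶠ w in 𝓝[≠] (0:ℂ), w ≠ 0 ∧ ‖w‖ < R₁⁻¹ := by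
      filter_upwards [self_mem_nhdsWithin,
        nhdsWithin_le_nhds (Metric.ball_mem_nhds (0:ℂ) (by positivity : (0:ℝ) < R₁⁻¹))]
        with w hw1 hw2
      exact ⟨hw1, by simpa [Metric.mem_ball, dist_zero_right] using hw2⟩
    filter_upwards [hball] with w hw
    obtain ⟨hw0, hwlt⟩ := hw
    have heq : W =ᶠ[𝓝 w] fun u => (F u⁻¹)⁻¹ := by
      filter_upwards [isOpen_ne.mem_nhds (x := w) hw0] with u hu
      simp [hWdef, hu]
    rw [heq.differentiableAt_iff]
    have hFne : F w⁻¹ ≠ 0 := by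
      intro h
      have := hstep w hw0 hwlt
      rw [h, norm_zero] at this; linarith
    exact ((hF.differentiableAt.comp w (differentiableAt_id.inv hw0)).inv hFne)
  have hWcont : ContinuousAt W 0 := by
    rw [ContinuousAt, show W 0 = 0 by simp [hWdef]]
    rw [NormedAddCommGroup.tendsto_nhds_zero]
    intro ε hε
    obtain ⟨Rε, hRεpos, hRε⟩ := hbig (ε⁻¹ + 1)
    have : ∀ᶠ w : ℂ in 𝓝 0, ‖w‖ < Rε⁻¹ := by
      have := Metric.ball_mem_nhds (0:ℂ) (by positivity : (0:ℝ) < Rε⁻¹)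
      filter_upwards [this] with w hw
      simpa [Metric.mem_ball, dist_zero_right] using hw
    filter_upwards [this] with w hw
    rcases eq_or_ne w 0 with rfl | hw0
    · simpa [hWdef] using hε
    · have hFw : ε⁻¹ + 1 ≤ ‖F w⁻¹‖ := by
        apply hRε
        rw [norm_inv, le_inv_comm₀ hRεpos (norm_pos_iff.mpr hw0)]
        exact hw.le
      have hWw : W w = (F w⁻¹)⁻¹ := by simp [hWdef, hw0]
      rw [hWw, norm_inv]
      have h1 : (0:ℝ) < ε⁻¹ + 1 := by positivity
      calc ‖F w⁻¹‖⁻¹ ≤ (ε⁻¹ + 1)⁻¹ := by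
            apply inv_anti₀ h1 hFw
        _ < ε := by
            rw [inv_lt_comm₀ h1 hε]
            exact lt_add_of_pos_right _ one_pos
  have hWanal : AnalyticAt ℂ W 0 :=
    Complex.analyticAt_of_differentiable_on_punctured_nhds_of_continuousAt hWdiff hWcont
  -- W is not identically zero near 0
  have hWne0 : ¬ (∀ᶠ w in 𝓝 (0:ℂ), W w = 0) := by
    intro hcontra
    have h1 : ∀ᶠ w in 𝓝[≠] (0:ℂ), W w = 0 := nhdsWithin_le_nhds hcontra
    have h2 : ∀ᶠ w in 𝓝[≠] (0:ℂ), W w ≠ 0 := by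
      have hball : ∀ᶠ w in 𝓝[≠] (0:ℂ), w ≠ 0 ∧ ‖w‖ < R₁⁻¹ := by
        filter_upwards [self_mem_nhdsWithin,
          nhdsWithin_le_nhds (Metric.ball_mem_nhds (0:ℂ) (by positivity : (0:ℝ) < R₁⁻¹))]
          with w hw1 hw2
        exact ⟨hw1, by simpa [Metric.mem_ball, dist_zero_right] using hw2⟩
      filter_upwards [hball] with w ⟨hw0, hwlt⟩
      have hFne : F w⁻¹ ≠ 0 := by
        intro h
        have := hstep w hw0 hwlt
        rw [h, norm_zero] at this; linarith
      simp [hWdef, hw0, hFne]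
    obtain ⟨w, hw1, hw2⟩ := (h1.and h2).exists
    exact hw2 hw1
  have horder_ne : analyticOrderAt W 0 ≠ ⊤ := by
    rw [Ne, analyticOrderAt_eq_top]
    exact hWne0
  obtain ⟨n, hn⟩ : ∃ n : ℕ, analyticOrderAt W 0 = n := by
    lift analyticOrderAt W 0 to ℕ using horder_ne with n hn
    exact ⟨n, rfl⟩
  obtain ⟨g, hg_an, hg0, hfac⟩ := (hWanal.analyticOrderAt_eq_natCast (n := n)).mp hn
  -- lower bound on ‖g‖ near 0
  have hglb : ∀ᶠ w in 𝓝 (0:ℂ), ‖g 0‖ / 2 ≤ ‖g w‖ := by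
    have := hg_an.continuousAt
    rw [ContinuousAt] at this
    have hball := this (Metric.ball_mem_nhds (g 0) (half_pos (norm_pos_iff.mpr hg0)))
    filter_upwards [hball] with w hw
    have : ‖g w - g 0‖ < ‖g 0‖ / 2 := by
      simpa [Metric.mem_ball, dist_eq_norm] using hw
    have h2 := norm_sub_norm_le (g 0) (g w)
    rw [norm_sub_rev] at h2
    linarith
  -- collect eventual facts into a concrete δ
  have hev : ∀ᶠ w in 𝓝 (0:ℂ), (W w = w ^ n • g w ∧ ‖g 0‖/2 ≤ ‖g w‖) := by
    filter_upwards [hfac, hglb] with w h1 h2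
    exact ⟨by simpa using h1, h2⟩
  obtain ⟨δ, hδpos, hδ⟩ := Metric.eventually_nhds_iff.mp hev
  -- growth bound on F
  set c : ℝ := ‖g 0‖ / 2 with hc
  have hcpos : 0 < c := half_pos (norm_pos_iff.mpr hg0)
  have hgrow : ∀ z : ℂ, δ⁻¹ + 1 ≤ ‖z‖ → ‖F z‖ ≤ c⁻¹ * ‖z‖ ^ n := by
    intro z hz
    have hz0 : z ≠ 0 := by
      intro h; rw [h] at hz; simp at hz
      nlinarith [inv_pos.mpr hδpos]
    have hzinv : ‖(z⁻¹ : ℂ)‖ < δ := by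
      rw [norm_inv, inv_lt_comm₀ (norm_pos_iff.mpr hz0) hδpos]
      calc δ⁻¹ < δ⁻¹ + 1 := lt_add_of_pos_right _ one_pos
        _ ≤ ‖z‖ := hz
    obtain ⟨hW1, hW2⟩ := @hδ z⁻¹ (by rw [dist_zero_right]; exact hzinv)
    have hiz : (z⁻¹ : ℂ) ≠ 0 := inv_ne_zero hz0
    have hWz : W z⁻¹ = (F z)⁻¹ := by simp [hWdef, hiz]
    rw [hWz] at hW1
    -- ‖F z‖⁻¹ = ‖z⁻¹‖^n * ‖g z⁻¹‖ ≥ ‖z‖⁻ⁿ * c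
    have hnorm_eq : ‖F z‖⁻¹ = ‖(z⁻¹:ℂ)‖ ^ n * ‖g z⁻¹‖ := by
      rw [← norm_inv, hW1]
      rw [norm_smul, norm_pow]
    rcases eq_or_ne (F z) 0 with hFz | hFz
    · rw [hFz, norm_zero]
      exact mul_nonneg (inv_nonneg.mpr hcpos.le) (by positivity)
    · have hFzpos : 0 < ‖F z‖ := norm_pos_iff.mpr hFz
      have hlow : c * (‖z‖ ^ n)⁻¹ ≤ ‖F z‖⁻¹ := by
        rw [hnorm_eq, norm_inv, inv_pow]
        rw [mul_comm]
        gcongr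
      have := inv_anti₀ (mul_pos hcpos (inv_pos.mpr (pow_pos (norm_pos_iff.mpr hz0) n))) hlow
      rwa [inv_inv, mul_inv, inv_inv] at this
  obtain ⟨p, hp⟩ := entire_poly_growth_is_poly n F hF c⁻¹ (δ⁻¹ + 1) hgrow
  obtain ⟨b, hb⟩ := poly_translation p (fun z => by rw [← hp, ← hp, hFeq])
  exact ⟨b, fun z => by rw [hp, hb]⟩
end
end

section
/- Let a ∈ ℂ \ {0} and let F : ℂ → ℂ be entire and non-constant with F(z + 1) = a·F(z) for all z ∈ ℂ. Then F is not canonical; that is, it cannot hold that both (i) for all z, w ∈ ℂ, (∃ m ∈ ℤ with F(z) = a^m·F(w)) if and only if z − w ∈ ℤ, and (ii) for every w ∈ ℂ there exist z ∈ ℂ and m ∈ ℤ with a^m·w = F(z). -/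
open Complex Filter Set Topology

noncomputable section

section Auxiliary

open Metric Polynomial

/-- An entire function with polynomial growth is a polynomial. -/
lemma entire_poly_of_growth : ∀ (d : ℕ) (f : ℂ → ℂ), Differentiable ℂ f →
    ∀ C : ℝ, (∀ z, ‖f z‖ ≤ C * (1 + ‖z‖) ^ d) →
    ∃ P : Polynomial ℂ, ∀ z, f z = P.eval z := by
  intro d
  induction d with
  | zero =>
    intro f hf C hC
    have hb : Bornology.IsBounded (Set.range f) := by
      refine isBounded_iff_forall_norm_le.2 ⟨C, ?_⟩
      rintro x ⟨z, rfl⟩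
      simpa using hC z
    obtain ⟨c, hc⟩ := hf.exists_eq_const_of_bounded hb
    exact ⟨Polynomial.C c, fun z => by rw [hc]; simp [Function.const]⟩
  | succ d ih =>
    intro f hf C hC
    set g := dslope f 0 with hg
    have hgd : Differentiable ℂ g := by
      rw [← differentiableOn_univ]
      exact (Complex.differentiableOn_dslope (by simp)).2 hf.differentiableOn
    -- bound for g on the closed unit ball
    obtain ⟨M, hM⟩ : ∃ M, ∀ z ∈ closedBall (0:ℂ) 1, ‖g z‖ ≤ M := by
      obtain ⟨M, hM⟩ := (isCompact_closedBall (0:ℂ) 1).exists_bound_of_continuousOn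
        hgd.continuous.continuousOn
      exact ⟨M, hM⟩
    set C' := max M (C * 2 ^ (d + 1) + ‖f 0‖) with hC'
    have hgb : ∀ z, ‖g z‖ ≤ C' * (1 + ‖z‖) ^ d := by
      intro z
      have h1 : (1:ℝ) ≤ (1 + ‖z‖) ^ d := one_le_pow₀ (by simp [norm_nonneg] : (1:ℝ) ≤ 1 + ‖z‖)
      by_cases hz : ‖z‖ ≤ 1
      · calc ‖g z‖ ≤ M := hM z (by simpa using hz)
          _ ≤ C' := le_max_left _ _
          _ ≤ C' * (1 + ‖z‖) ^ d := le_mul_of_one_le_right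
              (le_trans (norm_nonneg (g 0)) (by
                calc ‖g 0‖ ≤ M := hM 0 (by simp)
                  _ ≤ C' := le_max_left _ _)) h1
      · push_neg at hz
        have hz0 : z ≠ 0 := by intro h; rw [h] at hz; simp at hz; linarith
        have hgz : g z = (f z - f 0) / z := by
          rw [hg, dslope_of_ne f hz0, slope_def_field]
          field_simp
          ring
        have h2 : (1 + ‖z‖) ≤ 2 * ‖z‖ := by linarith
        have h3 : ‖g z‖ = ‖f z - f 0‖ / ‖z‖ := by rw [hgz, norm_div]
        have h4 : ‖f z - f 0‖ ≤ C * (1 + ‖z‖)^(d+1) + ‖f 0‖ := by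
          calc ‖f z - f 0‖ ≤ ‖f z‖ + ‖f 0‖ := norm_sub_le _ _
            _ ≤ C * (1 + ‖z‖)^(d+1) + ‖f 0‖ := by linarith [hC z]
        have hCpos : 0 ≤ C := by
          have := le_trans (norm_nonneg (f 0)) (hC 0)
          simpa using this
        have h5 : C * (1 + ‖z‖)^(d+1) ≤ C * 2^(d+1) * (1+‖z‖)^d * ‖z‖ := by
          have : (1 + ‖z‖)^(d+1) ≤ (2*‖z‖) * (1+‖z‖)^d := by
            rw [pow_succ]
            calc (1 + ‖z‖)^d * (1+‖z‖) ≤ (1+‖z‖)^d * (2*‖z‖) := by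
                  apply mul_le_mul_of_nonneg_left h2 (by positivity)
              _ = (2*‖z‖) * (1+‖z‖)^d := by ring
          calc C * (1 + ‖z‖)^(d+1) ≤ C * ((2*‖z‖) * (1+‖z‖)^d) :=
                mul_le_mul_of_nonneg_left this hCpos
            _ = C * 2 * (1+‖z‖)^d * ‖z‖ := by ring
            _ ≤ C * 2^(d+1) * (1+‖z‖)^d * ‖z‖ := by
                apply mul_le_mul_of_nonneg_right _ (norm_nonneg z)
                apply mul_le_mul_of_nonneg_right _ (by positivity)
                have : (2:ℝ) ≤ 2^(d+1) := by
                  calc (2:ℝ) = 2^1 := by norm_num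
                    _ ≤ 2^(d+1) := pow_le_pow_right₀ (by norm_num) (by omega)
                nlinarith
        have h6 : ‖f 0‖ ≤ ‖f 0‖ * (1+‖z‖)^d * ‖z‖ := by
          calc ‖f 0‖ = ‖f 0‖ * 1 * 1 := by ring
            _ ≤ ‖f 0‖ * (1+‖z‖)^d * ‖z‖ := by
                apply mul_le_mul (mul_le_mul le_rfl h1 zero_le_one (norm_nonneg _)) hz.le
                  (by norm_num) (by positivity)
        rw [h3, div_le_iff₀ (by linarith : (0:ℝ) < ‖z‖)]
        calc ‖f z - f 0‖ ≤ C * (1 + ‖z‖)^(d+1) + ‖f 0‖ := h4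
          _ ≤ C * 2^(d+1) * (1+‖z‖)^d * ‖z‖ + ‖f 0‖ * (1+‖z‖)^d * ‖z‖ := by linarith
          _ = (C * 2^(d+1) + ‖f 0‖) * (1+‖z‖)^d * ‖z‖ := by ring
          _ ≤ C' * (1+‖z‖)^d * ‖z‖ := by
              apply mul_le_mul_of_nonneg_right _ (norm_nonneg z)
              apply mul_le_mul_of_nonneg_right (le_max_right _ _) (by positivity)
    obtain ⟨P, hP⟩ := ih g hgd C' hgb
    refine ⟨Polynomial.C (f 0) + Polynomial.X * P, fun z => ?_⟩
    have := sub_smul_dslope f 0 z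
    simp only [sub_zero, smul_eq_mul] at this
    rw [Polynomial.eval_add, Polynomial.eval_C, Polynomial.eval_mul, Polynomial.eval_X, ← hP z]
    rw [← hg] at this
    linear_combination -this

/-- If `f` is holomorphic on a punctured disc and stays at distance `≥ δ` from some value `c`,
then `f` has at worst power growth at the puncture. -/
lemma power_bound (f : ℂ → ℂ) (r : ℝ) (hr : 0 < r)
    (hf : ∀ w : ℂ, w ≠ 0 → ‖w‖ < r → DifferentiableAt ℂ f w)
    (c : ℂ) (δ : ℝ) (hδ : 0 < δ)
    (hsep : ∀ w : ℂ, w ≠ 0 → ‖w‖ < r → δ ≤ ‖f w - c‖) :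
    ∃ (m : ℕ) (C r' : ℝ), 0 < r' ∧ r' ≤ 1 ∧
      ∀ w : ℂ, w ≠ 0 → ‖w‖ < r' → ‖f w‖ * ‖w‖ ^ m ≤ C := by
  set s : Set ℂ := ball (0:ℂ) r with hs
  have hmem : ∀ w : ℂ, w ∈ s \ {0} → (w ≠ 0 ∧ ‖w‖ < r) := by
    intro w hw
    refine ⟨hw.2, ?_⟩
    have := hw.1
    rw [hs, mem_ball, dist_eq_norm, sub_zero] at this
    exact this
  have hne : ∀ w : ℂ, w ≠ 0 → ‖w‖ < r → f w - c ≠ 0 := by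
    intro w h1 h2
    have := hsep w h1 h2
    intro h; rw [h] at this; simp at this; linarith
  set g : ℂ → ℂ := fun w => (f w - c)⁻¹ with hgdef
  have hg : DifferentiableOn ℂ g (s \ {0}) := by
    intro w hw
    obtain ⟨h1, h2⟩ := hmem w hw
    exact (((hf w h1 h2).sub_const c).inv (hne w h1 h2)).differentiableWithinAt
  have hb : BddAbove (norm ∘ g '' (s \ {0})) := by
    refine ⟨δ⁻¹, ?_⟩
    rintro x ⟨w, hw, rfl⟩
    obtain ⟨h1, h2⟩ := hmem w hw
    simp only [Function.comp, hgdef, norm_inv]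
    exact inv_anti₀ hδ (hsep w h1 h2)
  set G := Function.update g 0 (limUnder (𝓝[≠] (0:ℂ)) g) with hGdef
  have hsnhds : s ∈ 𝓝 (0:ℂ) := ball_mem_nhds _ hr
  have hG : DifferentiableOn ℂ G s :=
    Complex.differentiableOn_update_limUnder_of_bddAbove hsnhds hg hb
  have hGa : AnalyticAt ℂ G 0 := hG.analyticAt hsnhds
  have hGg : ∀ w : ℂ, w ≠ 0 → G w = g w := by
    intro w hw; exact Function.update_of_ne hw _ _
  -- the order of G at 0 is finite
  rcases eq_or_ne (analyticOrderAt G 0) ⊤ with htop | hfin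
  · exfalso
    have hev := analyticOrderAt_eq_top.1 htop
    obtain ⟨ε, hε, hev⟩ := Metric.eventually_nhds_iff.1 hev
    set w : ℂ := ((min ε r / 2 : ℝ) : ℂ) with hw
    have hwr : (0:ℝ) < min ε r / 2 := by positivity
    have hwne : w ≠ 0 := by
      simp only [hw, ne_eq, Complex.ofReal_eq_zero]
      linarith
    have hwnorm : ‖w‖ = min ε r / 2 := by
      rw [hw, Complex.norm_real, Real.norm_eq_abs, abs_of_pos hwr]
    have h1 : ‖w‖ < r := by rw [hwnorm]; have := min_le_right ε r; linarith
    have h2 : dist w 0 < ε := by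
      rw [dist_eq_norm, sub_zero, hwnorm]; have := min_le_left ε r; linarith
    have := hev h2
    rw [hGg w hwne] at this
    exact (inv_ne_zero (hne w hwne h1)) this
  · lift analyticOrderAt G 0 to ℕ using hfin with m hm
    obtain ⟨u, hu, hu0, huev⟩ := (hGa.analyticOrderAt_eq_natCast (n := m)).1 hm.symm
    -- continuity of u near 0
    have hupos : (0:ℝ) < ‖u 0‖ := norm_pos_iff.2 hu0
    have hunear : ∀ᶠ w in 𝓝 (0:ℂ), ‖u 0‖ / 2 < ‖u w‖ :=
      (hu.continuousAt.norm.tendsto).eventually_const_lt (by linarith)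
    have hall : ∀ᶠ w in 𝓝 (0:ℂ), (‖u 0‖ / 2 < ‖u w‖ ∧ G w = (w - 0) ^ m • u w) :=
      hunear.and huev
    obtain ⟨ε, hε, hev⟩ := Metric.eventually_nhds_iff.1 hall
    refine ⟨m, 2 / ‖u 0‖ + ‖c‖, min (min ε r) 1, by positivity, min_le_right _ _, ?_⟩
    intro w hwne hwlt
    have hwε : dist w 0 < ε := by
      rw [dist_eq_norm, sub_zero]
      exact lt_of_lt_of_le hwlt ((min_le_left _ _).trans (min_le_left _ _))
    have hwr : ‖w‖ < r := lt_of_lt_of_le hwlt ((min_le_left _ _).trans (min_le_right _ _))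
    have hw1 : ‖w‖ ≤ 1 := le_of_lt (lt_of_lt_of_le hwlt (min_le_right _ _))
    obtain ⟨h1, h2⟩ := hev hwε
    rw [hGg w hwne] at h2
    have hwpos : (0:ℝ) < ‖w‖ := norm_pos_iff.2 hwne
    have hGnorm : ‖g w‖ = ‖w‖ ^ m * ‖u w‖ := by
      rw [h2]; simp [norm_smul, norm_pow]
    have hfcn : ‖f w - c‖ = ‖g w‖⁻¹ := by
      simp only [g, norm_inv, inv_inv]
    have huwpos : (0:ℝ) < ‖u w‖ := lt_trans (by positivity) h1
    have hwm : (‖w‖:ℝ) ^ m ≠ 0 := ne_of_gt (pow_pos hwpos m)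
    have key : ‖f w - c‖ * ‖w‖ ^ m ≤ 2 / ‖u 0‖ := by
      rw [hfcn, hGnorm]
      have h3 : ‖u w‖⁻¹ ≤ (‖u 0‖/2)⁻¹ := by
        apply inv_anti₀ (by linarith) (le_of_lt h1)
      calc (‖w‖ ^ m * ‖u w‖)⁻¹ * ‖w‖ ^ m
            = (‖w‖ ^ m)⁻¹ * ‖u w‖⁻¹ * ‖w‖ ^ m := by rw [mul_inv]
        _ = ‖u w‖⁻¹ * ((‖w‖ ^ m)⁻¹ * ‖w‖ ^ m) := by ring
        _ = ‖u w‖⁻¹ := by rw [inv_mul_cancel₀ hwm, mul_one]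
        _ ≤ (‖u 0‖/2)⁻¹ := h3
        _ = 2 / ‖u 0‖ := by rw [div_eq_mul_inv, mul_inv, inv_inv, div_eq_mul_inv]; ring
    calc ‖f w‖ * ‖w‖ ^ m ≤ (‖f w - c‖ + ‖c‖) * ‖w‖ ^ m := by
          apply mul_le_mul_of_nonneg_right _ (by positivity)
          calc ‖f w‖ = ‖(f w - c) + c‖ := by ring_nf
            _ ≤ ‖f w - c‖ + ‖c‖ := norm_add_le _ _
      _ = ‖f w - c‖ * ‖w‖ ^ m + ‖c‖ * ‖w‖ ^ m := by ring
      _ ≤ 2 / ‖u 0‖ + ‖c‖ * 1 := by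
          have : ‖w‖ ^ m ≤ 1 := pow_le_one₀ (norm_nonneg w) hw1
          have h4 : ‖c‖ * ‖w‖ ^ m ≤ ‖c‖ * 1 := mul_le_mul_of_nonneg_left this (norm_nonneg c)
          linarith [key]
      _ = 2 / ‖u 0‖ + ‖c‖ := by ring

lemma image_ball (H : ℂ → ℂ) (p : ℂ) (ε : ℝ) (hε : 0 < ε)
    (hd : ∀ q ∈ ball p ε, AnalyticAt ℂ H q)
    (hne : H p ≠ 0)
    (hinj : ∀ q q', q ∈ ball p ε → q' ∈ ball p ε → H q ≠ 0 → H q = H q' → q = q') :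
    ∃ δ : ℝ, 0 < δ ∧ δ ≤ ‖H p‖ ∧ ball (H p) δ ⊆ H '' ball p ε := by
  have han : AnalyticOnNhd ℂ H (ball p ε) := fun q hq => hd q hq
  rcases han.is_constant_or_isOpen (convex_ball p ε).isPreconnected with ⟨w, hw⟩ | hopen
  · exfalso
    set p₁ : ℂ := p + (ε/2 : ℝ) with hp₁
    set p₂ : ℂ := p - (ε/2 : ℝ) with hp₂
    have hd1 : p₁ ∈ ball p ε := by
      simp only [hp₁, mem_ball, dist_eq_norm, add_sub_cancel_left]
      rw [Complex.norm_real, Real.norm_eq_abs, abs_of_pos (by linarith)]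
      linarith
    have hd2 : p₂ ∈ ball p ε := by
      simp only [hp₂, mem_ball, dist_eq_norm, sub_sub_cancel_left, norm_neg]
      rw [Complex.norm_real, Real.norm_eq_abs, abs_of_pos (by linarith)]
      linarith
    have hpp : p ∈ ball p ε := mem_ball_self hε
    have h1 : H p₁ = w := hw p₁ hd1
    have h2 : H p₂ = w := hw p₂ hd2
    have h0 : H p = w := hw p hpp
    have : p₁ = p₂ := hinj p₁ p₂ hd1 hd2 (by rw [h1, ← h0]; exact hne) (by rw [h1, h2])
    rw [hp₁, hp₂] at this
    have hε2 : ((ε:ℂ)/2) = 0 := by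
      have := sub_eq_zero.2 this
      push_cast at this ⊢
      linear_combination this / 2
    have : (ε:ℂ) = 0 := by linear_combination 2 * hε2
    rw [Complex.ofReal_eq_zero] at this
    linarith
  · have : IsOpen (H '' ball p ε) := hopen _ (subset_refl _) isOpen_ball
    obtain ⟨δ₀, hδ₀, hsub⟩ := Metric.isOpen_iff.1 this (H p) ⟨p, mem_ball_self hε, rfl⟩
    refine ⟨min δ₀ ‖H p‖, lt_min hδ₀ (norm_pos_iff.2 hne), min_le_right _ _, ?_⟩
    exact (ball_subset_ball (min_le_left _ _)).trans hsub

lemma no_good_F (F : ℂ → ℂ) (hF : Differentiable ℂ F)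
    (hzero : ∀ R : ℝ, ∃ z : ℂ, R < ‖z‖ ∧ F z = 0)
    (hex : ∃ p, F p ≠ 0)
    (hinj : ∀ z w : ℂ, F z ≠ 0 → F z = F w → z = w) : False := by
  obtain ⟨p, hp⟩ := hex
  by_cases hdense : ∀ (R : ℝ) (c : ℂ) (δ : ℝ), 0 < δ → ∃ z, R < ‖z‖ ∧ ‖F z - c‖ < δ
  · obtain ⟨δ, hδ, hδle, hsub⟩ := image_ball F p 1 one_pos
      (fun q _ => hF.analyticAt q)
      hp (fun q q' _ _ h1 h2 => hinj q q' h1 h2)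
    obtain ⟨z, hz, hclose⟩ := hdense (‖p‖ + 1) (F p) δ hδ
    have hmem : F z ∈ ball (F p) δ := by
      rw [mem_ball, dist_eq_norm]; exact hclose
    obtain ⟨p', hp', hEq⟩ := hsub hmem
    have hFz : F z ≠ 0 := by
      intro h
      rw [h] at hclose
      rw [norm_sub_rev, sub_zero] at hclose
      linarith [hδle]
    have : p' = z := hinj p' z (by rw [hEq]; exact hFz) (by rw [hEq])
    have hnorm : ‖p'‖ < ‖p‖ + 1 := by
      have := mem_ball_iff_norm.1 hp'
      calc ‖p'‖ = ‖p + (p' - p)‖ := by ring_nf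
        _ ≤ ‖p‖ + ‖p' - p‖ := norm_add_le _ _
        _ < ‖p‖ + 1 := by linarith
    rw [this] at hnorm
    linarith
  · push_neg at hdense
    obtain ⟨R, c, δ, hδ, hsep⟩ := hdense
    set R' : ℝ := max R 1 with hR'
    have hR'pos : (0:ℝ) < R' := lt_of_lt_of_le one_pos (le_max_right _ _)
    have hrinv : (0:ℝ) < R'⁻¹ := by positivity
    obtain ⟨m, C, r', hr', hr'1, hbound⟩ := power_bound (fun w => F w⁻¹) R'⁻¹ hrinv
      (fun w hw _ => hF.differentiableAt.comp w (differentiableAt_inv hw))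
      c δ hδ
      (fun w hw hwr => by
        apply hsep
        have h1 : ‖w‖⁻¹ > R' := by
          rw [gt_iff_lt, ← inv_inv R']
          exact inv_strictAnti₀ (norm_pos_iff.2 hw) hwr
        rw [norm_inv]
        calc R ≤ R' := le_max_left _ _
          _ < ‖w‖⁻¹ := h1)
    have zbound : ∀ z : ℂ, r'⁻¹ < ‖z‖ → ‖F z‖ ≤ C * ‖z‖ ^ m := by
      intro z hz
      have hzpos : (0:ℝ) < ‖z‖ := lt_trans (by positivity) hz
      have hzne : z ≠ 0 := norm_pos_iff.1 hzpos
      have hw : ‖z⁻¹‖ < r' := by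
        rw [norm_inv, ← inv_inv r']
        exact inv_strictAnti₀ (by positivity) hz
      have := hbound z⁻¹ (inv_ne_zero hzne) hw
      rw [inv_inv, norm_inv, inv_pow] at this
      have hpow : (0:ℝ) < ‖z‖ ^ m := pow_pos hzpos m
      calc ‖F z‖ = ‖F z‖ * (‖z‖ ^ m)⁻¹ * ‖z‖ ^ m := by
            rw [mul_assoc, inv_mul_cancel₀ (ne_of_gt hpow), mul_one]
        _ ≤ C * ‖z‖ ^ m := mul_le_mul_of_nonneg_right this (le_of_lt hpow)
    obtain ⟨M, hM⟩ := (isCompact_closedBall (0:ℂ) r'⁻¹).exists_bound_of_continuousOn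
      hF.continuous.continuousOn
    set C₂ : ℝ := max C M with hC₂
    have hC₂0 : (0:ℝ) ≤ C₂ := by
      have h0mem : (0:ℂ) ∈ closedBall (0:ℂ) r'⁻¹ := by
        simp [mem_closedBall]; positivity
      exact le_trans (le_trans (norm_nonneg (F 0)) (hM 0 h0mem)) (le_max_right _ _)
    have growth : ∀ z : ℂ, ‖F z‖ ≤ C₂ * (1 + ‖z‖) ^ m := by
      intro z
      have h1 : (1:ℝ) ≤ (1 + ‖z‖) ^ m := one_le_pow₀ (by simp [norm_nonneg])
      by_cases hz : ‖z‖ ≤ r'⁻¹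
      · calc ‖F z‖ ≤ M := hM z (by simpa [mem_closedBall, dist_eq_norm] using hz)
          _ ≤ C₂ := le_max_right _ _
          _ ≤ C₂ * (1 + ‖z‖) ^ m := le_mul_of_one_le_right hC₂0 h1
      · push_neg at hz
        calc ‖F z‖ ≤ C * ‖z‖ ^ m := zbound z hz
          _ ≤ C₂ * (1 + ‖z‖) ^ m := by
              apply mul_le_mul (le_max_left _ _) _ (by positivity) hC₂0
              exact pow_le_pow_left₀ (norm_nonneg z) (by linarith) m
    obtain ⟨P, hP⟩ := entire_poly_of_growth m F hF C₂ growth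
    have hinf : {x : ℂ | P.IsRoot x}.Infinite := by
      by_contra hfinite
      rw [Set.not_infinite] at hfinite
      obtain ⟨R₀, hR₀⟩ := isBounded_iff_forall_norm_le.1 hfinite.isBounded
      obtain ⟨z, hz1, hz2⟩ := hzero R₀
      have : P.IsRoot z := by
        rw [Polynomial.IsRoot, ← hP z]; exact hz2
      linarith [hR₀ z this]
    have hP0 : P = 0 := P.eq_zero_of_infinite_isRoot hinf
    apply hp
    rw [hP p, hP0]
    simp

lemma endgame (P : Polynomial ℂ) (hP0 : P.eval 0 ≠ 0) (s : ℤ) (H : ℂ → ℂ)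
    (hH : ∀ w : ℂ, w ≠ 0 → H w = w ^ s * P.eval w)
    (hsurj : ∀ c : ℂ, ∃ w, w ≠ 0 ∧ H w = c)
    (hinj : ∀ q q' : ℂ, q ≠ 0 → q' ≠ 0 → H q ≠ 0 → H q = H q' → q = q') : False := by
  classical
  set np : ℕ := s.toNat with hnp
  set nm : ℕ := (-s).toNat with hnm
  have hsnm : (np : ℤ) - (nm : ℤ) = s := by omega
  have hzer : np = 0 ∨ nm = 0 := by omega
  set R : Polynomial ℂ := X ^ np * P with hR
  set Q : ℂ → Polynomial ℂ := fun c => R - C c * X ^ nm with hQ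
  -- evaluation identity
  have key1 : ∀ (c : ℂ) (w : ℂ), w ≠ 0 → ((Q c).eval w = 0 ↔ H w = c) := by
    intro c w hw
    have e1 : (w : ℂ) ^ (np : ℕ) = w ^ s * w ^ (nm : ℕ) := by
      rw [← zpow_natCast w np, ← zpow_natCast w nm, ← zpow_add₀ hw]
      congr 1
      omega
    have e2 : (Q c).eval w = (H w - c) * w ^ nm := by
      simp only [hQ, hR, eval_sub, eval_mul, eval_pow, eval_X, eval_C]
      rw [e1, hH w hw]
      ring
    rw [e2, mul_eq_zero]
    have hwnm : (w : ℂ) ^ nm ≠ 0 := pow_ne_zero _ hw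
    constructor
    · rintro (h | h)
      · exact sub_eq_zero.1 h
      · exact absurd h hwnm
    · intro h; left; rw [h]; ring
  -- good values of c
  set good : Set ℂ := {c : ℂ | c ≠ 0 ∧ c ≠ P.eval 0} with hgood
  have hgoodinf : good.Infinite := by
    have : good = ({0, P.eval 0} : Set ℂ)ᶜ := by
      ext c; simp [hgood, mem_compl_iff]
    rw [this]
    exact Set.Finite.infinite_compl (Set.toFinite _)
  have key2 : ∀ c ∈ good, (Q c).eval 0 ≠ 0 := by
    intro c hc
    obtain ⟨hc0, hcP⟩ := hc
    simp only [hQ, hR, eval_sub, eval_mul, eval_pow, eval_X, eval_C]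
    rcases hzer with h | h
    · rcases Nat.eq_zero_or_pos nm with h2 | h2
      · rw [h, h2]
        simpa [sub_eq_zero] using fun hh => hcP hh.symm
      · rw [h]
        rw [zero_pow (by omega : nm ≠ 0)]
        simpa using hP0
    · rcases Nat.eq_zero_or_pos np with h2 | h2
      · rw [h, h2]
        simpa [sub_eq_zero] using fun hh => hcP hh.symm
      · rw [h]
        rw [zero_pow (by omega : np ≠ 0)]
        simpa using hc0
  have key3 : ∀ c ∈ good, Q c ≠ 0 := by
    intro c hc h
    apply key2 c hc
    rw [h]; simp
  -- choose a root of Q c via surjectivity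
  have key4 : ∀ c : ℂ, ∃ w, w ≠ 0 ∧ H w = c ∧ (Q c).eval w = 0 := by
    intro c
    obtain ⟨w, hw, hHw⟩ := hsurj c
    exact ⟨w, hw, hHw, (key1 c w hw).2 hHw⟩
  set r : ℂ → ℂ := fun c => (key4 c).choose with hr
  have hrne : ∀ c, r c ≠ 0 := fun c => (key4 c).choose_spec.1
  have hrH : ∀ c, H (r c) = c := fun c => (key4 c).choose_spec.2.1
  have hrroot : ∀ c, (Q c).eval (r c) = 0 := fun c => (key4 c).choose_spec.2.2
  -- all roots of Q c are equal to r c, for good c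
  have key5 : ∀ c ∈ good, ∀ w, (Q c).eval w = 0 → w = r c := by
    intro c hc w hw
    have hwne : w ≠ 0 := by
      intro h; rw [h] at hw; exact key2 c hc hw
    have hHw : H w = c := (key1 c w hwne).1 hw
    exact hinj w (r c) hwne (hrne c) (by rw [hHw]; exact hc.1) (by rw [hHw, hrH c])
  -- r is injective on good
  have hrinj : ∀ c₁ c₂, r c₁ = r c₂ → c₁ = c₂ := by
    intro c₁ c₂ h
    rw [← hrH c₁, ← hrH c₂, h]
  set T : Set ℂ := {c | c ∈ good ∧ 2 ≤ (Q c).natDegree} with hT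
  by_cases hTinf : T.Infinite
  · -- many values with multiple roots: derivative identity forces P trivial
    set B : Polynomial ℂ := X * (derivative R) - C (nm : ℂ) * R with hB
    have hBroot : ∀ c ∈ T, B.eval (r c) = 0 := by
      rintro c ⟨hcg, hcd⟩
      have hsplits : Splits (Q c) := IsAlgClosed.splits _
      have hcard : (Q c).roots.card = (Q c).natDegree := by
        have := hsplits.natDegree_eq_card_roots
        omega
      have hallr : ∀ x ∈ (Q c).roots, r c = x := by
        intro x hx
        exact (key5 c hcg x ((Polynomial.mem_roots'.1 hx).2)).symm
      have hmult : 2 ≤ (Q c).rootMultiplicity (r c) := by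
        rw [← Polynomial.count_roots, Multiset.count_eq_card.2 hallr, hcard]
        exact hcd
      have hdvd : (X - C (r c)) ^ 2 ∣ Q c :=
        dvd_trans (pow_dvd_pow _ hmult) (Polynomial.pow_rootMultiplicity_dvd _ _)
      obtain ⟨k, hk⟩ := hdvd
      have hder : (derivative (Q c)).eval (r c) = 0 := by
        rw [hk, derivative_mul]
        simp [Polynomial.derivative_pow, Polynomial.derivative_sub]
      have hQder : derivative (Q c) = derivative R - C c * (C (nm:ℂ) * X ^ (nm - 1)) := by
        simp [hQ, Polynomial.derivative_sub, Polynomial.derivative_C_mul,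
          Polynomial.derivative_X_pow]
      have hder' : (derivative R).eval (r c) = c * nm * (r c) ^ (nm - 1) := by
        rw [hQder] at hder
        simp only [eval_sub, eval_mul, eval_C, eval_pow, eval_X] at hder
        linear_combination hder
      have hQeval : R.eval (r c) = c * (r c) ^ nm := by
        have := hrroot c
        simp only [hQ, eval_sub, eval_mul, eval_C, eval_pow, eval_X] at this
        linear_combination this
      have hBeval : B.eval (r c) = r c * (derivative R).eval (r c) - nm * R.eval (r c) := by
        simp [hB]
      rw [hBeval, hder', hQeval]
      rcases Nat.eq_zero_or_pos nm with h0 | hpos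
      · rw [h0]; simp
      · have : r c * (r c) ^ (nm - 1) = (r c) ^ nm := by
          rw [← pow_succ']
          congr 1
          omega
        linear_combination (c * (nm:ℂ)) * this
    have hBzero : B = 0 := by
      apply Polynomial.eq_zero_of_infinite_isRoot
      have himg : (r '' T).Infinite :=
        hTinf.image (fun c₁ _ c₂ _ h => hrinj c₁ c₂ h)
      apply himg.mono
      rintro x ⟨c, hc, rfl⟩
      exact hBroot c hc
    have hcoeff : ∀ j : ℕ, ((j : ℂ) - nm) * R.coeff j = 0 := by
      intro j
      have h0 : B.coeff j = 0 := by rw [hBzero]; simp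
      cases j with
      | zero =>
        rw [hB] at h0
        simp only [Polynomial.coeff_sub, Polynomial.mul_coeff_zero,
          Polynomial.coeff_X_zero, Polynomial.coeff_C_mul, Polynomial.coeff_C_zero,
          zero_mul] at h0
        push_cast
        linear_combination h0
      | succ i =>
        rw [hB] at h0
        simp only [Polynomial.coeff_sub, Polynomial.coeff_X_mul,
          Polynomial.coeff_derivative, Polynomial.coeff_C_mul] at h0
        push_cast
        push_cast at h0
        linear_combination h0
    have hcoeffz : ∀ j : ℕ, j ≠ nm → R.coeff j = 0 := by
      intro j hj
      have := hcoeff j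
      rcases mul_eq_zero.1 this with h | h
      · exfalso
        apply hj
        have : (j : ℂ) = (nm : ℂ) := by linear_combination h
        exact_mod_cast this
      · exact h
    have hRnp : R.coeff np = P.coeff 0 := by
      rw [hR]
      have := Polynomial.coeff_X_pow_mul P np 0
      rw [zero_add] at this
      exact this
    have hP00 : P.coeff 0 ≠ 0 := by
      rw [Polynomial.coeff_zero_eq_eval_zero]; exact hP0
    have hnpnm : np = nm := by
      by_contra h
      exact hP00 (hRnp ▸ hcoeffz np h)
    have hnp0 : np = 0 := by omega
    have hnm0 : nm = 0 := by omega
    have hs0 : s = 0 := by omega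
    have hRP : R = P := by rw [hR, hnp0]; simp
    have hPC : P = C (P.coeff 0) := by
      ext j
      cases j with
      | zero => simp
      | succ i =>
        rw [Polynomial.coeff_C]
        simp only [Nat.succ_ne_zero, if_false]
        have := hcoeffz (i+1) (by omega)
        rw [hRP] at this
        exact this
    have hHconst : ∀ w : ℂ, w ≠ 0 → H w = P.eval 0 := by
      intro w hw
      rw [hH w hw, hs0, hPC]
      simp
    obtain ⟨w, hw, hHw⟩ := hsurj (P.eval 0 + 1)
    rw [hHconst w hw] at hHw
    simp at hHw
  · -- all but finitely many values give degree ≤ 1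
    rw [Set.not_infinite] at hTinf
    have hdiff : (good \ T).Infinite := hgoodinf.diff hTinf
    obtain ⟨c₁, hc₁, c₂, hc₂, hcne⟩ := hdiff.nontrivial
    have hdeg : ∀ c, c ∈ good \ T → (Q c).natDegree ≤ 1 := by
      rintro c ⟨hcg, hcT⟩
      by_contra h
      exact hcT ⟨hcg, by omega⟩
    have hd₁ : (Q c₁).natDegree ≤ 1 := hdeg c₁ hc₁
    have hd₂ : (Q c₂).natDegree ≤ 1 := hdeg c₂ hc₂
    have hsub : Q c₂ - Q c₁ = C (c₁ - c₂) * X ^ nm := by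
      simp only [hQ, Polynomial.C_sub]
      ring
    have hnm1 : nm ≤ 1 := by
      have h1 : (Q c₂ - Q c₁).natDegree ≤ 1 :=
        le_trans (Polynomial.natDegree_sub_le _ _) (by omega)
      rw [hsub] at h1
      rw [Polynomial.natDegree_C_mul_X_pow nm (c₁ - c₂) (sub_ne_zero.2 hcne)] at h1
      exact h1
    have hRQ : R = Q c₁ + C c₁ * X ^ nm := by simp [hQ]
    have hR1 : R.natDegree ≤ 1 := by
      rw [hRQ]
      refine le_trans (Polynomial.natDegree_add_le _ _) ?_
      refine max_le hd₁ (le_trans (Polynomial.natDegree_C_mul_X_pow_le _ _) hnm1)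
    have hPne : P ≠ 0 := fun h => hP0 (by simp [h])
    have hXnp : (X : Polynomial ℂ) ^ np ≠ 0 := pow_ne_zero _ Polynomial.X_ne_zero
    have hRdeg : R.natDegree = np + P.natDegree := by
      rw [hR, Polynomial.natDegree_mul hXnp hPne, Polynomial.natDegree_X_pow]
    have hnp1 : np + P.natDegree ≤ 1 := by omega
    have hP1 : P.natDegree ≤ 1 := by omega
    set p₀ : ℂ := P.coeff 0 with hp₀
    set p₁ : ℂ := P.coeff 1 with hp₁
    have hPshape : P = C p₁ * X + C p₀ := Polynomial.eq_X_add_C_of_natDegree_le_one hP1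
    have hp₀ne : p₀ ≠ 0 := by
      rw [hp₀, Polynomial.coeff_zero_eq_eval_zero]; exact hP0
    have hevalP : ∀ w : ℂ, P.eval w = p₁ * w + p₀ := by
      intro w; rw [hPshape]; simp
    -- case analysis on (np, nm)
    rcases Nat.lt_or_ge np 1 with hnp0 | hnp0
    · have hnp0 : np = 0 := by omega
      rcases Nat.lt_or_ge nm 1 with hnm0 | hnm0
      · -- s = 0 : H = P affine
        have hnm0 : nm = 0 := by omega
        have hs0 : s = 0 := by omega
        have hHw : ∀ w : ℂ, w ≠ 0 → H w = p₁ * w + p₀ := by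
          intro w hw
          rw [hH w hw, hs0, hevalP]
          simp
        have hp₁0 : p₁ = 0 := by
          obtain ⟨w, hw, hHw'⟩ := hsurj p₀
          rw [hHw w hw] at hHw'
          have : p₁ * w = 0 := by linear_combination hHw'
          rcases mul_eq_zero.1 this with h | h
          · exact h
          · exact absurd h hw
        obtain ⟨w, hw, hHw'⟩ := hsurj (p₀ + 1)
        rw [hHw w hw, hp₁0] at hHw'
        simp at hHw'
      · -- s = -1
        have hnm1' : nm = 1 := by omega
        have hsneg : s = -1 := by omega
        obtain ⟨w, hw, hHw'⟩ := hsurj p₁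
        rw [hH w hw, hsneg, hevalP] at hHw'
        have hwinv : w ^ (-1 : ℤ) = w⁻¹ := by
          rw [zpow_neg, zpow_one]
        rw [hwinv] at hHw'
        have : p₁ * w + p₀ = p₁ * w := by
          have := congrArg (fun x => w * x) hHw'
          rw [← mul_assoc, mul_inv_cancel₀ hw, one_mul] at this
          linear_combination this
        have : p₀ = 0 := by linear_combination this
        exact hp₀ne this
    · -- s = 1
      have hnp1' : np = 1 := by omega
      have hPdeg0 : P.natDegree = 0 := by omega
      have hs1 : s = 1 := by omega
      have hp₁0 : p₁ = 0 := by
        rw [hp₁]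
        exact Polynomial.coeff_eq_zero_of_natDegree_lt (by omega)
      obtain ⟨w, hw, hHw'⟩ := hsurj 0
      rw [hH w hw, hs1, hevalP, hp₁0] at hHw'
      simp only [zpow_one, zero_mul, zero_add] at hHw'
      rcases mul_eq_zero.1 hHw' with h | h
      · exact hw h
      · exact hp₀ne h

lemma no_good_H (H : ℂ → ℂ)
    (hd : ∀ q : ℂ, q ≠ 0 → DifferentiableAt ℂ H q)
    (hsurj : ∀ c : ℂ, ∃ q, q ≠ 0 ∧ H q = c)
    (hinj : ∀ q q' : ℂ, q ≠ 0 → q' ≠ 0 → H q ≠ 0 → H q = H q' → q = q') : False := by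
  have hdon : DifferentiableOn ℂ H {(0:ℂ)}ᶜ := fun q hq => (hd q hq).differentiableWithinAt
  have han : ∀ q : ℂ, q ≠ 0 → AnalyticAt ℂ H q := fun q hq =>
    hdon.analyticAt (isOpen_compl_singleton.mem_nhds hq)
  obtain ⟨p, hp0, hp1⟩ := hsurj 1
  have hppos : (0:ℝ) < ‖p‖ := norm_pos_iff.2 hp0
  set ε : ℝ := ‖p‖ / 2 with hε
  have hεpos : 0 < ε := by positivity
  have hballne : ∀ q : ℂ, q ∈ ball p ε → q ≠ 0 := by
    intro q hq h0
    rw [h0, mem_ball, dist_eq_norm, zero_sub, norm_neg] at hq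
    rw [hε] at hq
    linarith
  have hHp : H p ≠ 0 := by rw [hp1]; exact one_ne_zero
  obtain ⟨δ, hδ0, hδle, hsubim⟩ := image_ball H p ε hεpos
    (fun q hq => han q (hballne q hq)) hHp
    (fun q q' hq hq' h1 h2 => hinj q q' (hballne q hq) (hballne q' hq') h1 h2)
  -- collision: a point w outside the ball with H w in ball (H p) δ gives a contradiction
  have collide : ∀ w : ℂ, w ≠ 0 → w ∉ ball p ε → ‖H w - H p‖ < δ → False := by
    intro w hw0 hwball hclose
    have hmem : H w ∈ ball (H p) δ := by rw [mem_ball, dist_eq_norm]; exact hclose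
    obtain ⟨q', hq', hEq⟩ := hsubim hmem
    have hHw : H w ≠ 0 := by
      intro h
      rw [h, zero_sub, norm_neg] at hclose
      linarith [hδle]
    have : w = q' := hinj w q' hw0 (hballne q' hq') hHw hEq.symm
    rw [this] at hwball
    exact hwball hq'
  -- non-density at 0
  by_cases h0 : ∃ (c : ℂ) (δ' ρ : ℝ), 0 < δ' ∧ 0 < ρ ∧
      ∀ w : ℂ, w ≠ 0 → ‖w‖ < ρ → δ' ≤ ‖H w - c‖
  swap
  · push_neg at h0
    obtain ⟨w, hw0, hwsmall, hwclose⟩ := h0 (H p) δ (‖p‖/2) hδ0 (by positivity)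
    apply collide w hw0 _ hwclose
    intro hmem
    rw [mem_ball, dist_eq_norm] at hmem
    have : ‖p‖ ≤ ‖w‖ + ‖p - w‖ := by
      calc ‖p‖ = ‖w + (p - w)‖ := by ring_nf
        _ ≤ ‖w‖ + ‖p - w‖ := norm_add_le _ _
    rw [norm_sub_rev] at hmem
    rw [hε] at *
    linarith
  by_cases hinfty : ∃ (c : ℂ) (δ' R : ℝ), 0 < δ' ∧
      ∀ z : ℂ, R < ‖z‖ → δ' ≤ ‖H z - c‖
  swap
  · push_neg at hinfty
    obtain ⟨w, hwbig, hwclose⟩ := hinfty (H p) δ (‖p‖ + ε) hδ0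
    have hw0 : w ≠ 0 := by
      intro h; rw [h, norm_zero] at hwbig; linarith [hppos, hεpos]
    apply collide w hw0 _ hwclose
    intro hmem
    rw [mem_ball, dist_eq_norm] at hmem
    have : ‖w‖ ≤ ‖p‖ + ‖w - p‖ := by
      calc ‖w‖ = ‖p + (w - p)‖ := by ring_nf
        _ ≤ ‖p‖ + ‖w - p‖ := norm_add_le _ _
    linarith
  -- both ends non-essential: H is a Laurent polynomial
  obtain ⟨c0, δ0, ρ0, hδ0', hρ0, hsep0⟩ := h0
  obtain ⟨c1, δ1, R1, hδ1', hsep1⟩ := hinfty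
  obtain ⟨m₀, C₀, r₀, hr₀, hr₀1, hbound0⟩ := power_bound H ρ0 hρ0
    (fun w hw _ => hd w hw) c0 δ0 hδ0' hsep0
  set R' : ℝ := max R1 1 with hR'
  have hR'pos : (0:ℝ) < R' := lt_of_lt_of_le one_pos (le_max_right _ _)
  obtain ⟨m₁, C₁, r₁, hr₁, hr₁1, hbound1⟩ := power_bound (fun w => H w⁻¹) R'⁻¹ (by positivity)
    (fun w hw hwr => (hd w⁻¹ (inv_ne_zero hw)).comp w (differentiableAt_inv hw))
    c1 δ1 hδ1'
    (fun w hw hwr => by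
      apply hsep1
      rw [norm_inv]
      have h1 : ‖w‖⁻¹ > R' := by
        rw [gt_iff_lt, ← inv_inv R']
        exact inv_strictAnti₀ (norm_pos_iff.2 hw) hwr
      calc R1 ≤ R' := le_max_left _ _
        _ < ‖w‖⁻¹ := h1)
  have zbound : ∀ z : ℂ, r₁⁻¹ < ‖z‖ → ‖H z‖ ≤ C₁ * ‖z‖ ^ m₁ := by
    intro z hz
    have hzpos : (0:ℝ) < ‖z‖ := lt_trans (by positivity) hz
    have hzne : z ≠ 0 := norm_pos_iff.1 hzpos
    have hw : ‖z⁻¹‖ < r₁ := by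
      rw [norm_inv, ← inv_inv r₁]
      exact inv_strictAnti₀ (by positivity) hz
    have := hbound1 z⁻¹ (inv_ne_zero hzne) hw
    rw [inv_inv, norm_inv, inv_pow] at this
    have hpow : (0:ℝ) < ‖z‖ ^ m₁ := pow_pos hzpos m₁
    calc ‖H z‖ = ‖H z‖ * (‖z‖ ^ m₁)⁻¹ * ‖z‖ ^ m₁ := by
          rw [mul_assoc, inv_mul_cancel₀ (ne_of_gt hpow), mul_one]
      _ ≤ C₁ * ‖z‖ ^ m₁ := mul_le_mul_of_nonneg_right this (le_of_lt hpow)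
  -- construct the entire extension of w^m₀ * H w
  set G : ℂ → ℂ := fun w => w ^ m₀ * H w with hG
  have hGdiff : DifferentiableOn ℂ G (ball (0:ℂ) r₀ \ {0}) := by
    intro w hw
    have hw0 : w ≠ 0 := hw.2
    exact ((differentiableAt_pow m₀).mul (hd w hw0)).differentiableWithinAt
  have hGbdd : BddAbove (norm ∘ G '' (ball (0:ℂ) r₀ \ {0})) := by
    refine ⟨C₀, ?_⟩
    rintro x ⟨w, hw, rfl⟩
    have hw0 : w ≠ 0 := hw.2
    have hwr : ‖w‖ < r₀ := by
      have := hw.1; rwa [mem_ball, dist_eq_norm, sub_zero] at this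
    simp only [Function.comp, hG, norm_mul, norm_pow]
    calc ‖w‖ ^ m₀ * ‖H w‖ = ‖H w‖ * ‖w‖ ^ m₀ := by ring
      _ ≤ C₀ := hbound0 w hw0 hwr
  set f : ℂ → ℂ := Function.update G 0 (limUnder (𝓝[≠] (0:ℂ)) G) with hf
  have hfball : DifferentiableOn ℂ f (ball (0:ℂ) r₀) :=
    Complex.differentiableOn_update_limUnder_of_bddAbove (ball_mem_nhds _ hr₀) hGdiff hGbdd
  have hfG : ∀ w : ℂ, w ≠ 0 → f w = G w := fun w hw => Function.update_of_ne hw _ _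
  have hfdiff : Differentiable ℂ f := by
    intro z
    by_cases hz : z ∈ ball (0:ℂ) r₀
    · exact hfball.differentiableAt (isOpen_ball.mem_nhds hz)
    · have hz0 : z ≠ 0 := by
        intro h; apply hz; rw [h]; exact mem_ball_self hr₀
      have hGz : DifferentiableAt ℂ G z := (differentiableAt_pow m₀).mul (hd z hz0)
      apply hGz.congr_of_eventuallyEq
      filter_upwards [isOpen_compl_singleton.mem_nhds hz0] with w hw
      exact hfG w hw
  -- growth bound for f
  set R₂ : ℝ := max r₁⁻¹ 1 with hR₂
  have hR₂pos : (0:ℝ) < R₂ := lt_of_lt_of_le one_pos (le_max_right _ _)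
  obtain ⟨M, hM⟩ := (isCompact_closedBall (0:ℂ) R₂).exists_bound_of_continuousOn
    hfdiff.continuous.continuousOn
  set C₂ : ℝ := max C₁ M with hC₂
  have hC₂0 : (0:ℝ) ≤ C₂ := by
    have h0mem : (0:ℂ) ∈ closedBall (0:ℂ) R₂ := by simp [mem_closedBall]; positivity
    exact le_trans (le_trans (norm_nonneg (f 0)) (hM 0 h0mem)) (le_max_right _ _)
  have growth : ∀ z : ℂ, ‖f z‖ ≤ C₂ * (1 + ‖z‖) ^ (m₀ + m₁) := by
    intro z
    have h1 : (1:ℝ) ≤ (1 + ‖z‖) ^ (m₀ + m₁) := one_le_pow₀ (by simp [norm_nonneg])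
    by_cases hz : ‖z‖ ≤ R₂
    · calc ‖f z‖ ≤ M := hM z (by simpa [mem_closedBall, dist_eq_norm] using hz)
        _ ≤ C₂ := le_max_right _ _
        _ ≤ C₂ * (1 + ‖z‖) ^ (m₀ + m₁) := le_mul_of_one_le_right hC₂0 h1
    · push_neg at hz
      have hzbig : r₁⁻¹ < ‖z‖ := lt_of_le_of_lt (le_max_left _ _) hz
      have hz0 : z ≠ 0 := by
        intro h; rw [h] at hz; simp at hz; linarith
      have : ‖f z‖ = ‖z‖ ^ m₀ * ‖H z‖ := by
        rw [hfG z hz0, hG]; simp [norm_mul, norm_pow]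
      rw [this]
      calc ‖z‖ ^ m₀ * ‖H z‖ ≤ ‖z‖ ^ m₀ * (C₁ * ‖z‖ ^ m₁) := by
            apply mul_le_mul_of_nonneg_left (zbound z hzbig) (by positivity)
        _ = C₁ * ‖z‖ ^ (m₀ + m₁) := by rw [pow_add]; ring
        _ ≤ C₂ * (1 + ‖z‖) ^ (m₀ + m₁) := by
            apply mul_le_mul (le_max_left _ _) _ (by positivity) hC₂0
            exact pow_le_pow_left₀ (norm_nonneg z) (by linarith) _
  obtain ⟨P, hPf⟩ := entire_poly_of_growth (m₀ + m₁) f hfdiff C₂ growth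
  have hPval : ∀ w : ℂ, w ≠ 0 → w ^ m₀ * H w = P.eval w := by
    intro w hw
    rw [← hPf w, hfG w hw, hG]
  have hPne : P ≠ 0 := by
    intro h
    have := hPval p hp0
    rw [h, hp1] at this
    simp at this
    exact pow_ne_zero m₀ hp0 (by simpa using this)
  obtain ⟨P₁, hfac, hndvd⟩ := P.exists_eq_pow_rootMultiplicity_mul_and_not_dvd hPne 0
  rw [Polynomial.C_0, sub_zero] at hfac hndvd
  set j : ℕ := P.rootMultiplicity 0 with hj
  have hP₁0 : P₁.eval 0 ≠ 0 := by
    intro h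
    apply hndvd
    rw [Polynomial.X_dvd_iff, Polynomial.coeff_zero_eq_eval_zero]
    exact h
  set sexp : ℤ := (j : ℤ) - (m₀ : ℤ) with hsexp
  have hHs : ∀ w : ℂ, w ≠ 0 → H w = w ^ sexp * P₁.eval w := by
    intro w hw
    have hwm : (w : ℂ) ^ m₀ ≠ 0 := pow_ne_zero _ hw
    apply mul_left_cancel₀ hwm
    have e : (w : ℂ) ^ (m₀:ℕ) * w ^ sexp = w ^ (j:ℕ) := by
      rw [← zpow_natCast w m₀, ← zpow_natCast w j, ← zpow_add₀ hw]
      congr 1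
      omega
    calc w ^ m₀ * H w = P.eval w := hPval w hw
      _ = w ^ j * P₁.eval w := by rw [hfac]; simp
      _ = (w ^ m₀ * w ^ sexp) * P₁.eval w := by rw [e]
      _ = w ^ m₀ * (w ^ sexp * P₁.eval w) := by ring
  exact endgame P₁ hP₁0 sexp H hHs hsurj hinj

end Auxiliary

/-- A non-constant entire map intertwining `z ↦ z + 1` with `z ↦ a·z` (`a ≠ 0`) is never
canonical. -/
theorem entire_translation_to_dilation_not_canonical
    (a : ℂ) (ha : a ≠ 0)
    (F : ℂ → ℂ)
    (hF : Differentiable ℂ F)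
    (hFnc : ∃ z w : ℂ, F z ≠ F w)
    (hFeq : ∀ z : ℂ, F (z + 1) = a * F z) :
    ¬ ((∀ z w : ℂ, ((∃ m : ℤ, F z = a ^ m * F w) ↔ (∃ m : ℤ, z - w = (m : ℂ)))) ∧
       (∀ w : ℂ, ∃ z : ℂ, ∃ m : ℤ, a ^ m * w = F z)) := by
  rintro ⟨hi, hii⟩
  -- F (z + n) = a ^ n * F z for all integers n
  have hFn : ∀ (n : ℤ) (z : ℂ), F (z + n) = a ^ n * F z := by
    intro n
    induction n using Int.induction_on with
    | zero => intro z; simp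
    | succ n ih =>
      intro z
      have h0 : (z : ℂ) + ((n : ℤ) + 1 : ℤ) = (z + (n : ℤ)) + 1 := by push_cast; ring
      rw [h0, hFeq, ih z, zpow_add_one₀ ha]
      ring
    | pred n ih =>
      intro z
      have h1 : (z : ℂ) + (-n : ℤ) = (z + (-n - 1 : ℤ)) + 1 := by push_cast; ring
      have h2 := ih z
      rw [h1, hFeq] at h2
      have h3 : a ^ (-(n:ℤ) - 1) = a ^ (-(n:ℤ)) * a⁻¹ := by
        rw [← zpow_neg_one a, ← zpow_add₀ ha, sub_eq_add_neg]
      rw [h3]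
      field_simp at h2 ⊢
      linear_combination h2
  -- F is surjective
  have Fsurj : ∀ c : ℂ, ∃ z : ℂ, F z = c := by
    intro c
    obtain ⟨z, m, hm⟩ := hii c
    refine ⟨z + (-m : ℤ), ?_⟩
    rw [hFn (-m) z, ← hm]
    rw [zpow_neg, ← mul_assoc, inv_mul_cancel₀ (zpow_ne_zero m ha), one_mul]
  -- key injectivity property
  have Finj : ∀ z w : ℂ, F z = F w → F w ≠ 0 → ∃ n : ℤ, z - w = (n : ℂ) ∧ a ^ n = 1 := by
    intro z w heq hne
    obtain ⟨n, hn⟩ := (hi z w).1 ⟨0, by rw [heq]; simp⟩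
    refine ⟨n, hn, ?_⟩
    have hz : z = w + (n : ℂ) := by linear_combination hn
    rw [hz, hFn n w] at heq
    have h1 : a ^ n * F w = 1 * F w := by rw [heq]; ring
    exact mul_right_cancel₀ hne h1
  -- a zero of F
  obtain ⟨z₀, hz₀⟩ : ∃ z₀, F z₀ = 0 := by
    obtain ⟨z, m, hm⟩ := hii 0
    exact ⟨z, by rw [← hm]; ring⟩
  have hzeros : ∀ n : ℤ, F (z₀ + n) = 0 := by
    intro n; rw [hFn n z₀, hz₀]; ring
  have hex : ∃ p, F p ≠ 0 := by
    obtain ⟨z, w, h⟩ := hFnc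
    by_cases hz : F z = 0
    · exact ⟨w, fun hw => h (by rw [hz, hw])⟩
    · exact ⟨z, hz⟩
  by_cases hroot : ∀ n : ℤ, a ^ n = 1 → n = 0
  · -- Case A : a is not a root of unity
    apply no_good_F F hF _ hex
    · intro z w hz hzw
      obtain ⟨n, hn, han⟩ := Finj z w hzw (by rw [← hzw]; exact hz)
      rw [hroot n han] at hn
      have : z - w = 0 := by rw [hn]; simp
      linear_combination this
    · intro R
      set n : ℕ := ⌈R + ‖z₀‖⌉₊ + 1 with hn
      refine ⟨z₀ + (n : ℂ), ?_, ?_⟩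
      · have h1 : (R + ‖z₀‖) ≤ ⌈R + ‖z₀‖⌉₊ := Nat.le_ceil _
        have h2 : ‖(n : ℂ)‖ = (n : ℝ) := by
          rw [Complex.norm_natCast]
        have h3 : ‖(n:ℂ)‖ - ‖z₀‖ ≤ ‖z₀ + (n:ℂ)‖ := by
          have := norm_add_le (-(z₀ : ℂ)) (z₀ + (n:ℂ))
          simp only [neg_add_cancel_left, norm_neg] at this
          linarith
        have h4 : ((n:ℕ):ℝ) = (⌈R + ‖z₀‖⌉₊ : ℝ) + 1 := by rw [hn]; push_cast; ring
        rw [h2, h4] at h3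
        linarith
      · have := hzeros (n : ℤ)
        rwa [Int.cast_natCast] at this
  · -- Case B : a is a root of unity; F is periodic
    push_neg at hroot
    obtain ⟨n₁, hn₁, hn₁ne⟩ := hroot
    have hNat : ∃ N : ℕ, 0 < N ∧ a ^ (N : ℕ) = 1 := by
      rcases lt_or_gt_of_ne hn₁ne with h | h
      · refine ⟨(-n₁).toNat, by omega, ?_⟩
        have : a ^ ((-n₁).toNat : ℤ) = 1 := by
          rw [Int.toNat_of_nonneg (by omega)]
          rw [zpow_neg, hn₁, inv_one]
        rwa [zpow_natCast] at this
      · refine ⟨n₁.toNat, by omega, ?_⟩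
        have : a ^ (n₁.toNat : ℤ) = 1 := by
          rw [Int.toNat_of_nonneg (by omega)]
          exact hn₁
        rwa [zpow_natCast] at this
    classical
    set k : ℕ := Nat.find hNat with hkdef
    obtain ⟨hkpos, hka⟩ := Nat.find_spec hNat
    have hkmin : ∀ j : ℕ, j < k → ¬(0 < j ∧ a ^ j = 1) := fun j hj => Nat.find_min hNat hj
    have hkC : (k : ℂ) ≠ 0 := Nat.cast_ne_zero.2 (by omega)
    -- divisibility
    have hdvd : ∀ n : ℤ, a ^ n = 1 → (k : ℤ) ∣ n := by
      intro n hn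
      have hkZ : (0:ℤ) < (k:ℤ) := by exact_mod_cast hkpos
      set q : ℤ := n / (k:ℤ) with hq
      set r : ℤ := n % (k:ℤ) with hrdef
      have hdecomp : (k:ℤ) * q + r = n := Int.mul_ediv_add_emod n k
      have hrnn : 0 ≤ r := Int.emod_nonneg n (by omega)
      have hrlt : r < k := Int.emod_lt_of_pos n hkZ
      have har : a ^ r = 1 := by
        have h1 : a ^ ((k:ℤ) * q + r) = 1 := by rw [hdecomp]; exact hn
        rw [zpow_add₀ ha, zpow_mul] at h1
        rw [zpow_natCast, hka, one_zpow, one_mul] at h1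
        exact h1
      have hr0 : r = 0 := by
        by_contra hr
        have hpos : 0 < r.toNat := by omega
        have hlt : r.toNat < k := by omega
        apply hkmin r.toNat hlt
        refine ⟨hpos, ?_⟩
        have : a ^ ((r.toNat : ℤ)) = 1 := by
          rwa [Int.toNat_of_nonneg hrnn]
        rwa [zpow_natCast] at this
      exact ⟨q, by omega⟩
    -- F is periodic with period k
    have hper : ∀ (t : ℤ) (z : ℂ), F (z + (k:ℂ) * t) = F z := by
      intro t z
      have h1 : ((k:ℂ) * t) = (((k:ℤ) * t : ℤ) : ℂ) := by push_cast; ring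
      rw [h1, hFn ((k:ℤ)*t) z, zpow_mul, zpow_natCast, hka, one_zpow, one_mul]
    set tpi : ℂ := 2 * Real.pi * I with htpi
    have htpine : tpi ≠ 0 := Complex.two_pi_I_ne_zero
    set H : ℂ → ℂ := fun q => F ((k:ℂ) / tpi * Complex.log q) with hH
    -- H ∘ exp recovers F
    have hexp_eq : ∀ z : ℂ, H (Complex.exp (tpi * z / k)) = F z := by
      intro z
      set w : ℂ := tpi * z / k with hw
      have h1 : Complex.exp (Complex.log (Complex.exp w) - w) = 1 := by
        rw [Complex.exp_sub, Complex.exp_log (Complex.exp_ne_zero w)]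
        exact div_self (Complex.exp_ne_zero w)
      obtain ⟨t, ht⟩ := Complex.exp_eq_one_iff.1 h1
      have hlog : Complex.log (Complex.exp w) = w + t * tpi := by
        linear_combination ht
      have harg : (k:ℂ) / tpi * Complex.log (Complex.exp w) = z + (k:ℂ) * t := by
        rw [hlog, hw]
        field_simp
      rw [hH]
      simp only
      rw [harg, hper t z]
    -- H is surjective onto ℂ (through nonzero points)
    have hHsurj : ∀ c : ℂ, ∃ q, q ≠ 0 ∧ H q = c := by
      intro c
      obtain ⟨z, hz⟩ := Fsurj c
      exact ⟨Complex.exp (tpi * z / k), Complex.exp_ne_zero _, by rw [hexp_eq z, hz]⟩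
    -- each nonzero q is exp of its log-preimage
    have hqexp : ∀ q : ℂ, q ≠ 0 → Complex.exp (tpi * ((k:ℂ) / tpi * Complex.log q) / k) = q := by
      intro q hq
      have : tpi * ((k:ℂ) / tpi * Complex.log q) / k = Complex.log q := by
        field_simp
      rw [this, Complex.exp_log hq]
    have hHF : ∀ q : ℂ, q ≠ 0 → H q = F ((k:ℂ) / tpi * Complex.log q) := fun q _ => rfl
    -- injectivity of H away from zeros
    have hHinj : ∀ q q' : ℂ, q ≠ 0 → q' ≠ 0 → H q ≠ 0 → H q = H q' → q = q' := by
      intro q q' hq hq' hne heq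
      set z : ℂ := (k:ℂ) / tpi * Complex.log q with hz
      set z' : ℂ := (k:ℂ) / tpi * Complex.log q' with hz'
      have hzq : Complex.exp (tpi * z / k) = q := hqexp q hq
      have hzq' : Complex.exp (tpi * z' / k) = q' := hqexp q' hq'
      have hFz : F z = H q := by rw [← hexp_eq z, hzq]
      have hFz' : F z' = H q' := by rw [← hexp_eq z', hzq']
      have hFeq' : F z = F z' := by rw [hFz, hFz', heq]
      have hFz'ne : F z' ≠ 0 := by rw [hFz', ← heq]; exact hne
      obtain ⟨n, hzz', han⟩ := Finj z z' hFeq' hFz'ne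
      obtain ⟨t, ht⟩ := hdvd n han
      have hzzt : z = z' + (k:ℂ) * t := by
        have : (n : ℂ) = (k:ℂ) * t := by
          rw [ht]; push_cast; ring
        rw [← this]
        linear_combination hzz'
      rw [← hzq, ← hzq', hzzt]
      have : tpi * (z' + (k:ℂ)*t) / k = tpi * z' / k + t * tpi := by
        field_simp
      rw [this, Complex.exp_add]
      have hexpt : Complex.exp ((t:ℂ) * tpi) = 1 := Complex.exp_int_mul_two_pi_mul_I t
      rw [hexpt, mul_one]
    -- differentiability of H away from 0
    have hHdiff : ∀ q : ℂ, q ≠ 0 → DifferentiableAt ℂ H q := by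
      intro q hq
      set H₂ : ℂ → ℂ := fun x => F ((k:ℂ) / tpi * (Complex.log (-x) + Real.pi * I)) with hH₂
      have hH12 : ∀ x : ℂ, x ≠ 0 → H₂ x = H x := by
        intro x hx
        have hnx : -x ≠ 0 := neg_ne_zero.2 hx
        have he1 : Complex.exp (Complex.log (-x) + Real.pi * I) = x := by
          rw [Complex.exp_add, Complex.exp_log hnx, Complex.exp_pi_mul_I]
          ring
        have h1 : Complex.exp (Complex.log x - (Complex.log (-x) + Real.pi * I)) = 1 := by
          rw [Complex.exp_sub, Complex.exp_log hx, he1]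
          exact div_self hx
        obtain ⟨t, ht⟩ := Complex.exp_eq_one_iff.1 h1
        have hlog : Complex.log x = Complex.log (-x) + Real.pi * I + t * tpi := by
          linear_combination ht
        have harg : (k:ℂ) / tpi * Complex.log x
            = (k:ℂ) / tpi * (Complex.log (-x) + Real.pi * I) + (k:ℂ) * t := by
          rw [hlog]
          field_simp
        rw [hH₂, hH]
        simp only
        rw [harg, hper t _]
      rcases (by
        rw [Complex.mem_slitPlane_iff, Complex.mem_slitPlane_iff]
        simp only [Complex.neg_re, Complex.neg_im, neg_ne_zero]
        rcases eq_or_ne q.im 0 with him | him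
        · have hre : q.re ≠ 0 := by
            intro hre
            apply hq
            exact Complex.ext hre him
          rcases lt_or_gt_of_ne hre with h | h
          · right; left; linarith
          · left; left; exact h
        · left; right; exact him
        : q ∈ Complex.slitPlane ∨ -q ∈ Complex.slitPlane) with hs | hs
      · exact (hF.differentiableAt).comp q
          ((differentiableAt_const _).mul (Complex.differentiableAt_log hs))
      · have hH₂diff : DifferentiableAt ℂ H₂ q := by
          apply (hF.differentiableAt).comp
          apply DifferentiableAt.mul (differentiableAt_const _)
          apply DifferentiableAt.add_const
          have hc : DifferentiableAt ℂ (Complex.log ∘ (fun y : ℂ => -y)) q :=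
            DifferentiableAt.comp q (Complex.differentiableAt_log hs)
              differentiable_neg.differentiableAt
          exact hc
        apply hH₂diff.congr_of_eventuallyEq
        filter_upwards [isOpen_compl_singleton.mem_nhds hq] with x hx
        exact (hH12 x hx).symm
    exact no_good_H H hHdiff hHsurj hHinj
end
end

section
/- Let φ be of parabolic zero-step type, and let h and h̃ be the semiconjugations obtained by renormalizing the iterates φ_n along the orbits of z₀ and z̃₀ respectively (as in the context). Then h̃(z) = h(z) − h(z̃₀) for all z ∈ ℍ. -/
open Complex Filter Set Topology

noncomputable section

/-- Uniqueness for parabolic zero-step self-maps: the Baker–Pommerenke semiconjugations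
obtained from two different base points differ by a constant: `h̃ = h - h(z̃₀)`. -/
theorem baker_pommerenke_uniqueness
    (φ p h ht : ℂ → ℂ) (z₀ zt₀ : ℂ)
    (hz₀ : z₀ ∈ UHP)
    (hzt₀ : zt₀ ∈ UHP)
    (hφmaps : Set.MapsTo φ UHP UHP)
    (hφdiff : DifferentiableOn ℂ φ UHP)
    (hφeq : ∀ z ∈ UHP, φ z = z + p z)
    (hpim : ∀ z ∈ UHP, 0 < (p z).im)
    (hpnt : NTLimZeroAtInf (fun z => p z / z))
    (hzs : ∀ z ∈ UHP,
      Filter.Tendsto (fun n : ℕ => rho (φ^[n] z) (φ^[n + 1] z)) Filter.atTop (nhds 0))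
    (hhdiff : DifferentiableOn ℂ h UHP)
    (hhz₀ : h z₀ = 0)
    (hhlim : TendstoLocallyUniformlyOn
      (fun (n : ℕ) (z : ℂ) => (φ^[n] z - φ^[n] z₀) / (φ^[n + 1] z₀ - φ^[n] z₀))
      h Filter.atTop UHP)
    (hhconj : ∀ z ∈ UHP, h (φ z) = h z + 1)
    (hhtdiff : DifferentiableOn ℂ ht UHP)
    (hhtz₀ : ht zt₀ = 0)
    (hhtlim : TendstoLocallyUniformlyOn
      (fun (n : ℕ) (z : ℂ) => (φ^[n] z - φ^[n] zt₀) / (φ^[n + 1] zt₀ - φ^[n] zt₀))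
      ht Filter.atTop UHP)
    (hhtconj : ∀ z ∈ UHP, ht (φ z) = ht z + 1) :
    ∀ z ∈ UHP, ht z = h z - h zt₀ := by
  intro z hz
  -- orbit points
  set D : ℕ → ℂ := fun n => φ^[n + 1] z₀ - φ^[n] z₀ with hD
  set Dt : ℕ → ℂ := fun n => φ^[n + 1] zt₀ - φ^[n] zt₀ with hDt
  have hφzt : φ zt₀ ∈ UHP := hφmaps hzt₀
  -- pointwise limits from locally uniform convergence
  have limh : ∀ w ∈ UHP,
      Tendsto (fun n : ℕ => (φ^[n] w - φ^[n] z₀) / D n) atTop (𝓝 (h w)) :=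
    fun w hw => hhlim.tendsto_at hw
  have limht : ∀ w ∈ UHP,
      Tendsto (fun n : ℕ => (φ^[n] w - φ^[n] zt₀) / Dt n) atTop (𝓝 (ht w)) :=
    fun w hw => hhtlim.tendsto_at hw
  -- Step 1 : Dt n / D n → 1
  have key : ∀ n : ℕ, (φ^[n] (φ zt₀) - φ^[n] z₀) / D n - (φ^[n] zt₀ - φ^[n] z₀) / D n
      = Dt n / D n := by
    intro n
    rw [div_sub_div_same]
    congr 1
    rw [← Function.iterate_succ_apply]
    ring
  have hc : Tendsto (fun n : ℕ => Dt n / D n) atTop (𝓝 1) := by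
    have := ((limh _ hφzt).sub (limh _ hzt₀))
    rw [hhconj _ hzt₀] at this
    simpa [key] using this
  -- eventually D n ≠ 0
  have hDne : ∀ᶠ n in atTop, D n ≠ 0 := by
    filter_upwards [hc.eventually_ne one_ne_zero] with n hn
    intro h0
    exact hn (by simp [h0])
  -- D n / Dt n → 1
  have hc' : Tendsto (fun n : ℕ => D n / Dt n) atTop (𝓝 1) := by
    have := hc.inv₀ one_ne_zero
    simpa [inv_div] using this
  -- Step 2 : combine
  have l1 : Tendsto (fun n : ℕ => (φ^[n] z - φ^[n] zt₀) / D n) atTop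
      (𝓝 (h z - h zt₀)) := by
    have := (limh _ hz).sub (limh _ hzt₀)
    simpa [div_sub_div_same, sub_sub_sub_cancel_right] using this
  have l2 : Tendsto (fun n : ℕ => (φ^[n] z - φ^[n] zt₀) / D n * (D n / Dt n)) atTop
      (𝓝 (h z - h zt₀)) := by
    simpa using l1.mul hc'
  have l3 : Tendsto (fun n : ℕ => (φ^[n] z - φ^[n] zt₀) / Dt n) atTop
      (𝓝 (h z - h zt₀)) := by
    refine l2.congr' ?_
    filter_upwards [hDne] with n hn
    rw [div_mul_div_comm, mul_comm (φ^[n] z - φ^[n] zt₀) (D n),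
      mul_div_mul_left _ _ hn]
  exact tendsto_nhds_unique (limht _ hz) l3
end
end
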